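/- arXiv:2211.00574 — 9 statements merged into one kernel-verified Lean document; each statement's English description precedes it below -/
import Mathlib

section
/- Let ≤ be a partial order on a set P and let x ∈ P. Then there exists a linear order ≤_l on P extending ≤ (i.e., y ≤ z implies y ≤_l z for all y, z ∈ P) such that {y ∈ P : y ≤_l x} = {y ∈ P : y ≤ x}. -/
/-- Claim 2.1: every partial order on `P` admits a linear extension in which
the down-set of `x` is exactly the down-set of `x` in the original order. -/
theorem exists_linear_extension_same_downset {P : Type*} [PartialOrder P] (x : P) :
    ∃ r : P → P → Prop, IsLinearOrder P r ∧ (∀ y z : P, y ≤ z → r y z) ∧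
      ∀ y : P, r y x ↔ y ≤ x := by
  -- intermediate order: push everything above x's downset
  let r' : P → P → Prop := fun y z => y ≤ z ∨ (y ≤ x ∧ ¬ z ≤ x)
  have hpo : IsPartialOrder P r' := by
    refine { refl := ?_, trans := ?_, antisymm := ?_ }
    · intro a; exact Or.inl le_rfl
    · intro a b c hab hbc
      rcases hab with hab | ⟨ha, hb⟩
      · rcases hbc with hbc | ⟨hb, hc⟩
        · exact Or.inl (hab.trans hbc)
        · exact Or.inr ⟨hab.trans hb, hc⟩
      · rcases hbc with hbc | ⟨hb', hc⟩
        · exact Or.inr ⟨ha, fun h => hb (hbc.trans h)⟩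
        · exact (hb hb').elim
    · intro a b hab hba
      rcases hab with hab | ⟨ha, hb⟩
      · rcases hba with hba | ⟨hb, ha⟩
        · exact le_antisymm hab hba
        · exact (ha (hab.trans hb)).elim
      · rcases hba with hba | ⟨hb', _⟩
        · exact (hb (hba.trans ha)).elim
        · exact (hb hb').elim
  obtain ⟨s, hs, hrs⟩ := @extend_partialOrder P r' hpo
  refine ⟨s, hs, fun y z h => hrs _ _ (Or.inl h), fun y => ⟨?_, fun h => hrs _ _ (Or.inl h)⟩⟩
  intro hyx
  by_contra hy
  have hxy : s x y := hrs _ _ (Or.inr ⟨le_rfl, hy⟩)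
  exact hy (hs.toIsPartialOrder.antisymm _ _ hyx hxy ▸ le_rfl)
end

section
/- Let K be a simplicial complex on [n] and let f be a generic basis of ℝ^n. Then Δ^p(K) = ⋃ Δ^{<_l}(K), where the union is taken over all strict linear orders <_l on the power set of [n] that extend the strict partial order <_p. -/
open scoped BigOperators

section Defs

variable {α : Type*}

/-- A family of finite sets is a simplicial complex if it is closed under taking subsets. -/
def IsComplex (K : Finset (Finset α)) : Prop :=
  ∀ σ ∈ K, ∀ τ ⊆ σ, τ ∈ K

/-- `K` is pure with all facets of cardinality `d` (i.e. pure `(d-1)`-dimensional). -/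
def PureCx (d : ℕ) (K : Finset (Finset α)) : Prop :=
  (∀ σ ∈ K, σ.card ≤ d) ∧ ∀ σ ∈ K, ∃ τ ∈ K, σ ⊆ τ ∧ τ.card = d

/-- `K` is `(d-1)`-dimensional: the largest faces have `d` elements. -/
def DimPred (d : ℕ) (K : Finset (Finset α)) : Prop :=
  (∀ σ ∈ K, σ.card ≤ d) ∧ ∃ σ ∈ K, σ.card = d

/-- The increasing embedding of `Fin (d-1)` into `Fin d` skipping `r`. -/
def skipF {d : ℕ} (r : Fin d) (k : Fin (d - 1)) : Fin d :=
  if (k : ℕ) < (r : ℕ) then ⟨(k : ℕ), by have := k.isLt; omega⟩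
  else ⟨(k : ℕ) + 1, by have := k.isLt; omega⟩

/-- The cofactor `C_{r,c}(M)` (0-indexed). -/
noncomputable def cofactor {d : ℕ} (M : Matrix (Fin d) (Fin d) ℝ) (r c : Fin d) : ℝ :=
  (-1 : ℝ) ^ ((r : ℕ) + (c : ℕ)) * (M.submatrix (skipF r) (skipF c)).det

/-- The matrix `M_{p,σ}` whose `j`-th column is `(p(v_j), 1)`, `v_j` the `j`-th smallest
element of `σ`. -/
noncomputable def faceMat [LinearOrder α] (d : ℕ) (p : α → Fin (d - 1) → ℝ)
    (σ : Finset α) (hσ : σ.card = d) : Matrix (Fin d) (Fin d) ℝ :=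
  fun i j => if h : (i : ℕ) < d - 1 then p (σ.orderEmbOfFin hσ j) ⟨i, h⟩ else 1

/-- The volume-rigidity matrix `𝔙(K,p)`. -/
noncomputable def volMatrix [LinearOrder α] (d : ℕ) (K : Finset (Finset α))
    (p : α → Fin (d - 1) → ℝ) :
    Matrix (α × Fin (d - 1)) {σ : Finset α // σ ∈ K ∧ σ.card = d} ℝ :=
  fun vi σ =>
    if h : vi.1 ∈ σ.1 then
      cofactor (faceMat d p σ.1 σ.2.2) (Fin.castLE (Nat.sub_le d 1) vi.2)
        ((σ.1.orderIsoOfFin σ.2.2).symm ⟨vi.1, h⟩)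
    else 0

/-- `p : V → ℝ^{d-1}` is generic: its coordinates are algebraically independent over `ℚ`. -/
def GenericEmb (d : ℕ) (V : Finset α) (p : α → Fin (d - 1) → ℝ) : Prop :=
  AlgebraicIndependent ℚ (fun x : {a // a ∈ V} × Fin (d - 1) => p x.1.1 x.2)

/-- `K`, with vertex set `V`, is volume-rigid. -/
def VolumeRigid [Fintype α] [LinearOrder α] (d : ℕ) (V : Finset α)
    (K : Finset (Finset α)) : Prop :=
  ∀ p : α → Fin (d - 1) → ℝ, GenericEmb d V p →
    (volMatrix d K p).rank = (d - 1) * V.card - (d ^ 2 - d - 1)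

/-- `sign(τ,σ) = (-1)^j` where the unique element of `σ \ τ` is the `j`-th smallest
element of `σ` (1-based). -/
def faceSgn [LinearOrder α] (τ σ : Finset α) : ℤ :=
  if h : (σ \ τ).card = 1 then
    (-1 : ℤ) ^
      (((σ.sort (· ≤ ·)).idxOf ((σ \ τ).min' (Finset.card_pos.mp (by omega)))) + 1)
  else 0

/-- The boundary of the integral `(d-1)`-chain `z` of `K` vanishes. -/
def BoundaryZeroZ [LinearOrder α] (d : ℕ) (K : Finset (Finset α)) (z : Finset α → ℤ) : Prop :=
  ∀ τ : Finset α, τ.card = d - 1 →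
    ∑ σ ∈ K.filter (fun σ => σ.card = d ∧ τ ⊆ σ), faceSgn τ σ * z σ = 0

/-- The boundary of the real `(d-1)`-chain `z` of `K` vanishes. -/
def BoundaryZeroR [LinearOrder α] (d : ℕ) (K : Finset (Finset α)) (z : Finset α → ℝ) : Prop :=
  ∀ τ : Finset α, τ.card = d - 1 →
    ∑ σ ∈ K.filter (fun σ => σ.card = d ∧ τ ⊆ σ), (faceSgn τ σ : ℝ) * z σ = 0

/-- `K` is a minimal cycle over `ℤ`. -/
def IsMinimalCycleZ [LinearOrder α] (d : ℕ) (K : Finset (Finset α)) : Prop :=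
  (∃ z : Finset α → ℤ, (∀ σ, ¬(σ ∈ K ∧ σ.card = d) → z σ = 0) ∧
      BoundaryZeroZ d K z ∧ ∀ σ ∈ K, σ.card = d → z σ ≠ 0) ∧
  ∀ z : Finset α → ℤ, (∀ σ, ¬(σ ∈ K ∧ σ.card = d) → z σ = 0) →
    BoundaryZeroZ d K z → z ≠ 0 → ∀ σ ∈ K, σ.card = d → z σ ≠ 0

/-- `K` is `(d-1, d²-d-1)`-sparse on vertex set `V`. -/
def Sparse [DecidableEq α] (d : ℕ) (V : Finset α) (K : Finset (Finset α)) : Prop :=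
  ∀ A ⊆ V, d ≤ A.card →
    (K.filter (fun σ => σ.card = d ∧ σ ⊆ A)).card ≤ (d - 1) * A.card - (d ^ 2 - d - 1)

/-- `K` is `(d-1, d²-d-1)`-tight on vertex set `V`. -/
def Tight [DecidableEq α] (d : ℕ) (V : Finset α) (K : Finset (Finset α)) : Prop :=
  Sparse d V K ∧
    (K.filter (fun σ => σ.card = d)).card = (d - 1) * V.card - (d ^ 2 - d - 1)

end Defs

section Shifting

/-- The partial order `σ ≤_p τ`: equal cardinalities and the `i`-th smallest element of `σ`
is at most the `i`-th smallest element of `τ`, for every `i`. -/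
def pLE {n : ℕ} (σ τ : Finset (Fin n)) : Prop :=
  List.Forall₂ (· ≤ ·) (σ.sort (· ≤ ·)) (τ.sort (· ≤ ·))

/-- The strict partial order `σ <_p τ`. -/
def pLT {n : ℕ} (σ τ : Finset (Fin n)) : Prop := pLE σ τ ∧ σ ≠ τ

/-- `f_σ = f_{σ_1} ∧ ⋯ ∧ f_{σ_k}` in the exterior algebra of `ℝ^n`. -/
noncomputable def extWedge {n : ℕ} (f : Fin n → (Fin n → ℝ)) (σ : Finset (Fin n)) :
    ExteriorAlgebra ℝ (Fin n → ℝ) :=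
  ((σ.sort (· ≤ ·)).map (fun i => ExteriorAlgebra.ι ℝ (f i))).prod

/-- The standard basis of `ℝ^n`. -/
noncomputable def stdVec (n : ℕ) : Fin n → (Fin n → ℝ) := fun i => Pi.single i 1

/-- The subspace spanned by `{e_τ : τ ∉ K, |τ| = k}`. -/
noncomputable def faceIdeal {n : ℕ} (K : Finset (Finset (Fin n))) (k : ℕ) :
    Submodule ℝ (ExteriorAlgebra ℝ (Fin n → ℝ)) :=
  Submodule.span ℝ
    {x | ∃ τ : Finset (Fin n), τ ∉ K ∧ τ.card = k ∧ x = extWedge (stdVec n) τ}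

/-- The quotient map `q`. -/
noncomputable def qMap {n : ℕ} (K : Finset (Finset (Fin n))) (k : ℕ) :
    ExteriorAlgebra ℝ (Fin n → ℝ) → ExteriorAlgebra ℝ (Fin n → ℝ) ⧸ faceIdeal K k :=
  fun x => Submodule.Quotient.mk x

/-- The shifted family `Δ^<(K)` associated with a strict order `lt` on subsets of `[n]`,
computed with respect to the basis `f`. -/
def DeltaLt {n : ℕ} (K : Finset (Finset (Fin n))) (f : Fin n → (Fin n → ℝ))
    (lt : Finset (Fin n) → Finset (Fin n) → Prop) : Set (Finset (Fin n)) :=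
  {σ | qMap K σ.card (extWedge f σ) ∉
    Submodule.span ℝ (qMap K σ.card '' (extWedge f '' {τ | lt τ σ ∧ τ.card = σ.card}))}

/-- `Δ^p(K)`, computed with respect to the basis `f`. -/
def DeltaP {n : ℕ} (K : Finset (Finset (Fin n))) (f : Fin n → (Fin n → ℝ)) :
    Set (Finset (Fin n)) := DeltaLt K f pLT

/-- `f` is a generic basis of `ℝ^n`: it is a basis, `f_1 = (1,…,1)`, and the coordinates of
`f_2, …, f_n` are algebraically independent over `ℚ`. -/
def GenericBasis {n : ℕ} (f : Fin n → (Fin n → ℝ)) : Prop :=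
  (∃ b : Module.Basis (Fin n) ℝ (Fin n → ℝ), ⇑b = f) ∧
  (∀ i : Fin n, (i : ℕ) = 0 → f i = 1) ∧
  AlgebraicIndependent ℚ (fun x : {i : Fin n // (i : ℕ) ≠ 0} × Fin n => f x.1.1 x.2)

/-- The set `{1,3,4,…,d,n}` (1-based), i.e. `{0,2,3,…,d-1,n-1}` as a subset of `Fin n`. -/
def sigma0 (d n : ℕ) : Finset (Fin n) :=
  Finset.univ.filter (fun i : Fin n =>
    (i : ℕ) = 0 ∨ (2 ≤ (i : ℕ) ∧ (i : ℕ) + 1 ≤ d) ∨ (i : ℕ) + 1 = n)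

end Shifting

/-
Whether `σ ∈ Δ^<(K)` depends on `<` only through the predecessors of `σ`, and more
predecessors can only remove `σ`. Every linear extension of `<_p` gives `σ` at least its
`<_p`-predecessors, whence `⊇`. For `⊆`, order the `≤_p`-lower set of `σ` before its
complement, each block by a (Szpilrajn) linear extension of `≤_p`: `σ` is the last element
of the first block, so its predecessors are exactly its `<_p`-predecessors.
-/

theorem exists_isStrictTotalOrder_extension_lt_iff {α : Type*} (p : α → α → Prop)
    [IsStrictOrder α p] (a : α) :
    ∃ r : α → α → Prop, IsStrictTotalOrder α r ∧ (∀ b c, p b c → r b c) ∧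
      ∀ b, r b a ↔ p b a := by
  classical
  let _ := partialOrderOfSO p
  let g : α → Bool ×ₗ LinearExtension α :=
    fun b => toLex (!decide (b ≤ a), toLinearExtension b)
  have hg : Function.Injective g := fun b c h => congrArg (fun x => (ofLex x).2) h
  have hL : StrictMono (toLinearExtension : α →o LinearExtension α) :=
    toLinearExtension.monotone.strictMono_of_injective fun _ _ h => h
  refine ⟨fun b c => g b < g c, (RelEmbedding.preimage ⟨g, hg⟩ (· < ·)).isStrictTotalOrder,
    fun b c hbc => ?_, fun b => ?_⟩
  · simp only [g, Prod.Lex.toLex_lt_toLex]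
    by_cases hc : c ≤ a
    · simp [le_trans (le_of_lt hbc) hc, hc, hL hbc]
    · by_cases hb : b ≤ a <;> simp [hb, hc, hL hbc]
  · simp only [g, Prod.Lex.toLex_lt_toLex, le_refl, decide_true, Bool.not_true]
    by_cases hb : b ≤ a
    · simp only [hb, decide_true, Bool.not_true, lt_self_iff_false, true_and, false_or]
      exact ⟨fun h => lt_of_le_of_ne hb (ne_of_apply_ne _ h.ne), fun h => hL h⟩
    · simp only [hb, decide_false, Bool.not_false, Bool.false_lt_true.not_gt, Bool.true_eq_false,
        false_and, or_self, false_iff]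
      exact fun h => hb (le_of_lt h)

namespace List.Forall₂

variable {α : Type*} {R : α → α → Prop}

theorem trans [IsTrans α R] {l₁ l₂ l₃ : List α} (h₁₂ : Forall₂ R l₁ l₂)
    (h₂₃ : Forall₂ R l₂ l₃) : Forall₂ R l₁ l₃ := by
  induction h₁₂ generalizing l₃ with
  | nil => exact h₂₃
  | cons hab _ ih =>
    obtain _ | ⟨hbc, h⟩ := h₂₃
    exact .cons (_root_.trans hab hbc) (ih h)

theorem antisymm [Std.Antisymm R] {l₁ l₂ : List α} (h₁₂ : Forall₂ R l₁ l₂)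
    (h₂₁ : Forall₂ R l₂ l₁) : l₁ = l₂ := by
  induction h₁₂ with
  | nil => rfl
  | cons hab _ ih =>
    obtain _ | ⟨hba, h⟩ := h₂₁
    rw [_root_.antisymm hab hba, ih h]

end List.Forall₂

section PLT

variable {n : ℕ}

theorem pLE_trans {σ τ ρ : Finset (Fin n)} (h₁ : pLE σ τ) (h₂ : pLE τ ρ) : pLE σ ρ :=
  List.Forall₂.trans h₁ h₂

theorem pLE_antisymm {σ τ : Finset (Fin n)} (h₁ : pLE σ τ) (h₂ : pLE τ σ) : σ = τ := by
  rw [← Finset.sort_toFinset σ (· ≤ ·), ← Finset.sort_toFinset τ (· ≤ ·),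
    List.Forall₂.antisymm h₁ h₂]

instance : IsStrictOrder (Finset (Fin n)) pLT where
  irrefl _ h := h.2 rfl
  trans _ _ _ h₁ h₂ :=
    ⟨pLE_trans h₁.1 h₂.1, fun h => h₁.2 (pLE_antisymm h₁.1 (h ▸ h₂.1))⟩

end PLT

theorem mem_deltaLt_of_imp {n : ℕ} {K : Finset (Finset (Fin n))} {f : Fin n → Fin n → ℝ}
    {r s : Finset (Fin n) → Finset (Fin n) → Prop} {σ : Finset (Fin n)}
    (h : ∀ τ, r τ σ → s τ σ) (hσ : σ ∈ DeltaLt K f s) : σ ∈ DeltaLt K f r := by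
  intro hmem
  refine hσ (Submodule.span_mono (Set.image_mono (Set.image_mono ?_)) hmem)
  exact Set.ofPred_subset_ofPred.2 fun τ hτ => ⟨h τ hτ.1, hτ.2⟩

theorem DeltaP_eq_iUnion_linear_extensions_general (n : ℕ) (K : Finset (Finset (Fin n)))
    (f : Fin n → (Fin n → ℝ)) :
    DeltaP K f =
      ⋃ r ∈ {r : Finset (Fin n) → Finset (Fin n) → Prop |
          IsStrictTotalOrder (Finset (Fin n)) r ∧ ∀ a b, pLT a b → r a b},
        DeltaLt K f r := by
  ext σ
  simp only [Set.mem_iUnion, exists_prop]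
  constructor
  · intro hσ
    obtain ⟨r, hr, hext, hiff⟩ := exists_isStrictTotalOrder_extension_lt_iff pLT σ
    exact ⟨r, ⟨hr, hext⟩, mem_deltaLt_of_imp (fun τ => (hiff τ).1) hσ⟩
  · rintro ⟨r, ⟨-, hext⟩, hσ⟩
    exact mem_deltaLt_of_imp (hext · σ) hσ

/-- Claim 2.2: `Δ^p(K)` is the union of `Δ^{<_l}(K)` over all strict linear
orders `<_l` on the power set of `[n]` extending the strict partial order `<_p`. -/
theorem DeltaP_eq_iUnion_linear_extensions (n : ℕ) (K : Finset (Finset (Fin n)))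
    (hK : IsComplex K) (f : Fin n → (Fin n → ℝ)) (hf : GenericBasis f) :
    DeltaP K f =
      ⋃ r ∈ {r : Finset (Fin n) → Finset (Fin n) → Prop |
          IsStrictTotalOrder (Finset (Fin n)) r ∧ ∀ a b, pLT a b → r a b},
        DeltaLt K f r :=
  DeltaP_eq_iUnion_linear_extensions_general n K f
end

section
/- Let K be a simplicial complex on [n], and let f and f' be two generic bases of ℝ^n. Then Δ^p(K) computed with respect to f equals Δ^p(K) computed with respect to f'. -/
open scoped BigOperators

/-!
In the basis `e_ρ` of `Λ^k ℝ^n`, the coordinates of `f_τ` are the `k × k` minors of `f` with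
rows `τ`; the `e_ρ` with `ρ ∉ K` span the kernel of the quotient map, so `q` amounts to
keeping only the minors with columns in `K`. Hence `σ ∈ Δ^<(K)` iff the vector of `K`-minors
of `f` at `σ` is not in the span of those at the `τ < σ`. For a generic basis, `f` is the
image of the generic matrix over `ℚ(x_ij)` under a field embedding, and membership in a span
of coordinate vectors is insensitive to extending the field; so the condition can be read off
the generic matrix and does not depend on `f`.
-/

theorem Submodule.mkQ_mem_span_image_iff {R M N : Type*} [Ring R] [AddCommGroup M] [Module R M]
    [AddCommGroup N] [Module R N] {p W : Submodule R M} {L : M →ₗ[R] N}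
    (hpL : p ≤ LinearMap.ker L) (hWL : W ⊓ LinearMap.ker L ≤ p) {x : M} (hx : x ∈ W)
    {S : Set M} (hS : S ⊆ W) :
    p.mkQ x ∈ span R (p.mkQ '' S) ↔ L x ∈ span R (L '' S) := by
  rw [← map_span, ← map_span]
  constructor
  · rintro ⟨y, hy, hyx⟩
    refine ⟨y, hy, ?_⟩
    simpa [sub_eq_zero] using hpL ((Quotient.eq p).mp hyx)
  · rintro ⟨y, hy, hyx⟩
    refine ⟨y, hy, (Quotient.eq p).mpr (hWL ⟨W.sub_mem (span_le.mpr hS hy) hx, ?_⟩)⟩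
    simp [LinearMap.mem_ker, hyx]

theorem RingHom.comp_mem_span_image_iff {K L ι β : Type*} [Field K] [Field L] (φ : K →+* L)
    (u : ι → β → K) (s : Set ι) (x : β → K) :
    φ ∘ x ∈ Submodule.span L ((fun i => φ ∘ u i) '' s) ↔
      x ∈ Submodule.span K (u '' s) := by
  let := φ.toAlgebra
  constructor
  · -- A `K`-linear `π : L → K` with `π 1 = 1`, applied coordinatewise, turns an `L`-linear
    -- relation among the `φ ∘ u i` into a `K`-linear one among the `u i`.
    intro hx
    obtain ⟨π, hπ⟩ := Module.Projective.exists_dual_eq_one K (one_ne_zero (α := L))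
    have hπφ (a : K) (c : L) : π (φ a * c) = a * π c := by
      change π (algebraMap K L a * c) = _
      rw [← Algebra.smul_def, map_smul, smul_eq_mul]
    have hπx : LinearMap.compLeft π β (φ ∘ x) = x := by
      funext b
      simpa [hπ] using hπφ (x b) 1
    obtain ⟨l, hls, hl⟩ := (Finsupp.mem_span_image_iff_linearCombination L).mp hx
    rw [← hπx, ← hl, Finsupp.linearCombination_apply, Finsupp.sum, map_sum]
    refine Submodule.sum_mem _ fun i hi => ?_
    have : LinearMap.compLeft π β (l i • (φ ∘ u i)) = π (l i) • u i := by
      funext b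
      simp [hπφ, mul_comm]
    rw [this]
    exact Submodule.smul_mem _ _ (Submodule.subset_span ⟨i, hls hi, rfl⟩)
  · intro hx
    have := Submodule.apply_mem_span_image_of_mem_span
      (LinearMap.compLeft (Algebra.linearMap K L) β) hx
    rw [Set.image_image] at this
    exact Submodule.span_le_restrictScalars K L _ this

section WedgeCoords

open Set Set.powersetCard

variable {R M I : Type*} [CommRing R] [AddCommGroup M] [Module R M]

noncomputable def ExteriorAlgebra.degreeProj (k : ℕ) : ExteriorAlgebra R M →ₗ[R] ⋀[R]^k M :=
  DirectSum.component R ℕ (fun i => ⋀[R]^i M) k ∘ₗ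
    (DirectSum.decomposeLinearEquiv fun i : ℕ => ⋀[R]^i M).toLinearMap

theorem ExteriorAlgebra.degreeProj_of_mem {k : ℕ} {x : ExteriorAlgebra R M}
    (hx : x ∈ ⋀[R]^k M) : degreeProj k x = ⟨x, hx⟩ :=
  Subtype.ext (DirectSum.decompose_of_mem_same (fun i : ℕ => ⋀[R]^i M) hx)

variable [LinearOrder I] (b : Module.Basis I R M) {k : ℕ}

noncomputable def ExteriorAlgebra.wedgeCoords (J : Set (powersetCard I k)) :
    ExteriorAlgebra R M →ₗ[R] (J → R) :=
  LinearMap.pi fun t => (b.exteriorPower k).coord t ∘ₗ degreeProj k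

theorem ExteriorAlgebra.wedgeCoords_ιMulti (J : Set (powersetCard I k)) (v : Fin k → M)
    (t : J) :
    wedgeCoords b J (ιMulti R k v) t =
      (Matrix.of fun i j => b.coord (ofFinEmbEquiv.symm t.1 j) (v i)).det := by
  have : degreeProj k (ιMulti R k v) = exteriorPower.ιMulti R k v :=
    degreeProj_of_mem (exteriorPower.ιMulti R k v).2
  simp [wedgeCoords, this, exteriorPower.basis_coord]

theorem ExteriorAlgebra.span_ιMulti_family_compl_le_ker_wedgeCoords
    (J : Set (powersetCard I k)) :
    Submodule.span R (ιMulti_family R k b '' Jᶜ) ≤ LinearMap.ker (wedgeCoords b J) := by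
  rw [Submodule.span_le]
  rintro _ ⟨s, hs, rfl⟩
  ext t
  have hst : s ≠ t := by rintro rfl; exact hs t.2
  have hs' : degreeProj k (ιMulti_family R k b s) = b.exteriorPower k s := by
    rw [exteriorPower.basis_apply]
    exact degreeProj_of_mem _
  simp [wedgeCoords, hs', hst]

theorem ExteriorAlgebra.exteriorPower_inf_ker_wedgeCoords_le (J : Set (powersetCard I k)) :
    ⋀[R]^k M ⊓ LinearMap.ker (wedgeCoords b J) ≤
      Submodule.span R (ιMulti_family R k b '' Jᶜ) := by
  rintro x ⟨hx, hJ⟩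
  have hsupp : ↑((b.exteriorPower k).repr ⟨x, hx⟩).support ⊆ Jᶜ := by
    intro s hs hsJ
    refine Finsupp.mem_support_iff.mp hs ?_
    simpa [wedgeCoords, degreeProj_of_mem hx] using congrFun hJ ⟨s, hsJ⟩
  have := Submodule.apply_mem_span_image_of_mem_span (⋀[R]^k M).subtype
    ((b.exteriorPower k).mem_span_image.mpr hsupp)
  simpa [Set.image_image] using this

end WedgeCoords

section FaceMinors

open Set Set.powersetCard

variable {n k : ℕ}

theorem extWedge_eq_ιMulti_family (f : Fin n → Fin n → ℝ) (σ : Finset (Fin n))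
    (hσ : σ.card = k) :
    extWedge f σ = ExteriorAlgebra.ιMulti_family ℝ k f ⟨σ, mem_iff.mpr hσ⟩ := by
  subst hσ
  rw [ExteriorAlgebra.ιMulti_family, ExteriorAlgebra.ιMulti_apply, extWedge]
  congr 1
  refine List.ext_getElem (by simp) fun i h₁ h₂ => ?_
  simp [ofFinEmbEquiv_symm_apply]
  rfl

def faceMinors {R : Type*} [CommRing R] (J : Set (powersetCard (Fin n) k))
    (A : Matrix (Fin n) (Fin n) R) (s : powersetCard (Fin n) k) : J → R :=
  fun t => (A.submatrix (ofFinEmbEquiv.symm s) (ofFinEmbEquiv.symm t.1)).det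

theorem faceMinors_map {R S : Type*} [CommRing R] [CommRing S] (φ : R →+* S)
    (J : Set (powersetCard (Fin n) k)) (A : Matrix (Fin n) (Fin n) R)
    (s : powersetCard (Fin n) k) :
    faceMinors J (A.map φ) s = φ ∘ faceMinors J A s := by
  funext t
  simp [faceMinors, RingHom.map_det, RingHom.mapMatrix_apply, Matrix.submatrix_map]

theorem wedgeCoords_ιMulti_family (J : Set (powersetCard (Fin n) k)) (f : Fin n → Fin n → ℝ)
    (s : powersetCard (Fin n) k) :
    ExteriorAlgebra.wedgeCoords (Pi.basisFun ℝ (Fin n)) J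
      (ExteriorAlgebra.ιMulti_family ℝ k f s) = faceMinors J f s := by
  funext t
  rw [ExteriorAlgebra.ιMulti_family, ExteriorAlgebra.wedgeCoords_ιMulti]
  rfl

theorem image_extWedge (f : Fin n → Fin n → ℝ) (P : Finset (Fin n) → Prop) :
    extWedge f '' {τ | P τ ∧ τ.card = k} =
      ExteriorAlgebra.ιMulti_family ℝ k f '' {s | P s.1} := by
  ext x
  constructor
  · rintro ⟨τ, ⟨hP, hτ⟩, rfl⟩
    exact ⟨⟨τ, mem_iff.mpr hτ⟩, hP, (extWedge_eq_ιMulti_family f τ hτ).symm⟩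
  · rintro ⟨s, hP, rfl⟩
    exact ⟨s.1, ⟨hP, s.2⟩, extWedge_eq_ιMulti_family f s.1 s.2⟩

theorem faceIdeal_eq (K : Finset (Finset (Fin n))) :
    faceIdeal K k = Submodule.span ℝ
      (ExteriorAlgebra.ιMulti_family ℝ k (Pi.basisFun ℝ (Fin n)) '' {t | t.1 ∈ K}ᶜ) := by
  have hstd : stdVec n = Pi.basisFun ℝ (Fin n) := by
    funext i
    simp [stdVec]
  rw [faceIdeal, ← hstd, Set.compl_ofPred, ← image_extWedge (P := (· ∉ K))]
  congr 1
  ext x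
  simp only [Set.mem_ofPred_eq, Set.mem_image]
  grind

theorem mem_DeltaLt_iff (K : Finset (Finset (Fin n))) (f : Fin n → Fin n → ℝ)
    (lt : Finset (Fin n) → Finset (Fin n) → Prop) (σ : Finset (Fin n)) :
    σ ∈ DeltaLt K f lt ↔
      faceMinors {t | t.1 ∈ K} f ⟨σ, mem_iff.mpr rfl⟩ ∉
        Submodule.span ℝ (faceMinors {t | t.1 ∈ K} f '' {s | lt s.1 σ}) := by
  set k := σ.card
  set J : Set (powersetCard (Fin n) k) := {t | t.1 ∈ K}
  set L := ExteriorAlgebra.wedgeCoords (Pi.basisFun ℝ (Fin n)) J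
  set S := ExteriorAlgebra.ιMulti_family ℝ k f '' {s | lt s.1 σ}
  have hW (s : powersetCard (Fin n) k) :
      ExteriorAlgebra.ιMulti_family ℝ k f s ∈ ⋀[ℝ]^k (Fin n → ℝ) :=
    (exteriorPower.ιMulti_family ℝ k f s).2
  have hS : faceMinors J f '' {s | lt s.1 σ} = L '' S := by
    simp only [S, Set.image_image, L, wedgeCoords_ιMulti_family]
  have hq : qMap K k = (faceIdeal K k).mkQ := rfl
  rw [DeltaLt, Set.mem_ofPred_eq, image_extWedge, extWedge_eq_ιMulti_family f σ rfl, hq,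
    faceIdeal_eq, hS, ← wedgeCoords_ιMulti_family]
  refine not_congr (Submodule.mkQ_mem_span_image_iff ?_ ?_ (hW _) ?_)
  · exact ExteriorAlgebra.span_ιMulti_family_compl_le_ker_wedgeCoords _ J
  · exact ExteriorAlgebra.exteriorPower_inf_ker_wedgeCoords_le _ J
  · rintro _ ⟨s, -, rfl⟩
    exact hW s

end FaceMinors

abbrev GenericPolynomial (n : ℕ) : Type :=
  MvPolynomial ({i : Fin n // (i : ℕ) ≠ 0} × Fin n) ℚ

abbrev GenericField (n : ℕ) : Type := FractionRing (GenericPolynomial n)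

noncomputable def genericMatrix (n : ℕ) : Matrix (Fin n) (Fin n) (GenericField n) :=
  fun i j => if h : (i : ℕ) = 0 then 1
    else algebraMap (GenericPolynomial n) (GenericField n) (.X (⟨i, h⟩, j))

theorem GenericBasis.exists_map_genericMatrix {n : ℕ} {f : Fin n → Fin n → ℝ}
    (hf : GenericBasis f) : ∃ φ : GenericField n →+* ℝ, (genericMatrix n).map φ = f := by
  obtain ⟨-, hone, halg⟩ := hf
  have hinj := algebraicIndependent_iff_injective_aeval.mp halg
  refine ⟨IsFractionRing.lift hinj, ?_⟩
  funext i j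
  by_cases hi : (i : ℕ) = 0
  · simp [genericMatrix, hi, hone i hi]
  · simp [genericMatrix, hi, IsFractionRing.lift_algebraMap]

theorem mem_DeltaLt_iff_genericMatrix {n : ℕ} (K : Finset (Finset (Fin n)))
    {f : Fin n → Fin n → ℝ} (hf : GenericBasis f)
    (lt : Finset (Fin n) → Finset (Fin n) → Prop) (σ : Finset (Fin n)) :
    σ ∈ DeltaLt K f lt ↔
      faceMinors {t | t.1 ∈ K} (genericMatrix n) ⟨σ, Set.powersetCard.mem_iff.mpr rfl⟩ ∉
        Submodule.span (GenericField n)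
          (faceMinors {t | t.1 ∈ K} (genericMatrix n) '' {s | lt s.1 σ}) := by
  obtain ⟨φ, hφ⟩ := hf.exists_map_genericMatrix
  rw [mem_DeltaLt_iff, ← hφ]
  simp only [faceMinors_map, φ.comp_mem_span_image_iff]

theorem DeltaP_independent_of_genericBasis_general (n : ℕ) (K : Finset (Finset (Fin n)))
    (f f' : Fin n → (Fin n → ℝ))
    (hf : GenericBasis f) (hf' : GenericBasis f') :
    DeltaP K f = DeltaP K f' := by
  ext σ
  rw [DeltaP, DeltaP, mem_DeltaLt_iff_genericMatrix K hf, mem_DeltaLt_iff_genericMatrix K hf']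

/-- part of Corollary 2.3: `Δ^p(K)` does not depend on the choice of the
generic basis. -/
theorem DeltaP_independent_of_genericBasis (n : ℕ) (K : Finset (Finset (Fin n)))
    (hK : IsComplex K) (f f' : Fin n → (Fin n → ℝ))
    (hf : GenericBasis f) (hf' : GenericBasis f') :
    DeltaP K f = DeltaP K f' :=
  DeltaP_independent_of_genericBasis_general n K f f' hf hf'
end

section
/- Fix d ≥ 2 and n ≥ d+1, and let f = (f_1,…,f_n) be any basis of ℝ^n. Define the linear map ψ : (ℝ^n)^{d−1} → Λ^d ℝ^n by ψ(m_2,…,m_d) = Σ_{i=2}^{d} f_{[d]∖{i}} ∧ m_i, where f_{[d]∖{i}} := f_1 ∧ … ∧ f_{i−1} ∧ f_{i+1} ∧ … ∧ f_d. Then the image of ψ equals the span of {f_τ : τ ⊆ [n], |τ| = d, τ ≤_p {1,3,4,…,d,n}} (equivalently, of f_{[d]} together with f_{([d]∖{i})∪{v}} for all 2 ≤ i ≤ d and d+1 ≤ v ≤ n), and the kernel of ψ has dimension d²−d−1. -/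
open scoped BigOperators

/-- The set `[d] ∖ {i}` (1-based), for `i` ranging over `2,…,d` (encoded by `Fin (d-1)`),
as a subset of `Fin n` (0-based). -/
def faceDel (d n : ℕ) (i : Fin (d - 1)) : Finset (Fin n) :=
  Finset.univ.filter (fun v : Fin n => (v : ℕ) < d ∧ (v : ℕ) ≠ (i : ℕ) + 1)

/-- The linear map `ψ(m_2,…,m_d) = Σ_{i=2}^d f_{[d]∖{i}} ∧ m_i`. -/
noncomputable def psiMap (d n : ℕ) (f : Fin n → (Fin n → ℝ)) :
    (Fin (d - 1) → (Fin n → ℝ)) →ₗ[ℝ] ExteriorAlgebra ℝ (Fin n → ℝ) :=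
  ∑ i : Fin (d - 1),
    (LinearMap.mulLeft ℝ (extWedge f (faceDel d n i))).comp
      ((ExteriorAlgebra.ι ℝ).comp (LinearMap.proj i))

/-!
Since `f` spans `ℝⁿ`, the image of `ψ` is spanned by the products `f_{[d]∖{i}} ∧ f_v`. Each of
them is `0` or `±f_τ` with `τ = ([d]∖{i}) ∪ {v}`, and these `τ` are `[d]` together with the sets
`([d]∖{i}) ∪ {v}`, `v > d`: exactly the `d`-sets containing `1` with at most one element beyond `d`,
which are the `τ ≤_p {1,3,…,d,n}`. The `f_τ` belong to the basis of the exterior algebra induced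
by `f`, so `ψ` has rank `1 + (d-1)(n-d)` and its kernel dimension `(d-1)n - 1 - (d-1)(n-d)`.
-/

open Finset ExteriorAlgebra Set.powersetCard

theorem Finset.orderEmbOfFin_lt_iff {α : Type*} [LinearOrder α] (s : Finset α) {k : ℕ}
    (h : s.card = k) (j : Fin k) (x : α) :
    s.orderEmbOfFin h j < x ↔ (j : ℕ) < #{a ∈ s | a < x} := by
  set e := s.orderEmbOfFin h
  have hcard : #{a ∈ s | a < x} = #{i | e i < x} := by
    conv_lhs => rw [← s.map_orderEmbOfFin_univ h, filter_map, card_map]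
    rfl
  rw [hcard]
  constructor
  · intro hj
    have hsub : Iic j ⊆ ({i | e i < x} : Finset (Fin k)) := fun i hi =>
      mem_filter.mpr ⟨mem_univ i, (e.monotone (mem_Iic.mp hi)).trans_lt hj⟩
    have := card_le_card hsub
    rw [Fin.card_Iic] at this
    omega
  · intro hj
    by_contra hx
    have hsub : ({i | e i < x} : Finset (Fin k)) ⊆ Iio j := fun i hi => by
      rw [mem_Iio, ← e.lt_iff_lt]
      exact (mem_filter.mp hi).2.trans_le (not_lt.mp hx)
    have := card_le_card hsub
    rw [Fin.card_Iio] at this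
    omega

theorem Fin.add_sub_le_of_strictMono {k N : ℕ} {e : Fin k → Fin N} (he : StrictMono e)
    {i j : Fin k} (hij : i ≤ j) : (e i : ℕ) + (j - i) ≤ e j := by
  have hsub : (Icc i j).image e ⊆ Icc (e i) (e j) := by
    intro x hx
    obtain ⟨y, hy, rfl⟩ := mem_image.mp hx
    obtain ⟨h1, h2⟩ := mem_Icc.mp hy
    exact mem_Icc.mpr ⟨he.monotone h1, he.monotone h2⟩
  have := card_le_card hsub
  rw [card_image_of_injective _ he.injective, Fin.card_Icc, Fin.card_Icc] at this
  have := he.monotone hij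
  rw [Fin.le_def] at this hij
  omega

theorem pLE_iff_forall_orderEmbOfFin_le {n k : ℕ} {τ σ : Finset (Fin n)} (hτ : τ.card = k)
    (hσ : σ.card = k) :
    pLE τ σ ↔ ∀ j, τ.orderEmbOfFin hτ j ≤ σ.orderEmbOfFin hσ j := by
  rw [pLE, List.forall₂_iff_get]
  simp [orderEmbOfFin_apply, hτ, hσ, Fin.forall_iff]

section Wedge

variable {n : ℕ} (b : Module.Basis (Fin n) ℝ (Fin n → ℝ))

theorem extWedge_eq_basis_exteriorAlgebra (s : Finset (Fin n)) :
    extWedge b s = b.ExteriorAlgebra s := by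
  rw [ExteriorAlgebra.basis_apply_ofCard b rfl, ιMulti_family, ιMulti_apply, extWedge,
    ← s.listMap_orderEmbOfFin_finRange rfl, List.map_map, List.ofFn_eq_map]
  rfl

theorem linearIndependent_extWedge :
    LinearIndependent ℝ (extWedge b) := by
  rw [show extWedge b = b.ExteriorAlgebra from funext (extWedge_eq_basis_exteriorAlgebra b)]
  exact b.ExteriorAlgebra.linearIndependent

theorem ι_eq_extWedge_singleton (f : Fin n → Fin n → ℝ) (v : Fin n) :
    ι ℝ (f v) = extWedge f {v} := by
  simp [extWedge]

theorem extWedge_mul_ι_of_notMem {σ : Finset (Fin n)} {v : Fin n} (hv : v ∉ σ) :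
    ∃ u : ℤˣ, extWedge b σ * ι ℝ (b v) = u • extWedge b (insert v σ) := by
  rw [ι_eq_extWedge_singleton, extWedge_eq_basis_exteriorAlgebra,
    extWedge_eq_basis_exteriorAlgebra, extWedge_eq_basis_exteriorAlgebra]
  have h : Disjoint (ofCard (rfl : #σ = _)).val (ofCard (rfl : #{v} = _)).val :=
    disjoint_singleton_right.mpr hv
  refine ⟨(permOfDisjoint h).sign, (basis_mul_of_disjoint b _ _ h).trans ?_⟩
  congr 2
  rw [Set.powersetCard.coe_disjUnion, disjUnion_eq_union, insert_eq, union_comm]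
  rfl

theorem extWedge_mul_ι_of_mem {σ : Finset (Fin n)} {v : Fin n} (hv : v ∈ σ) :
    extWedge b σ * ι ℝ (b v) = 0 := by
  rw [ι_eq_extWedge_singleton, extWedge_eq_basis_exteriorAlgebra,
    extWedge_eq_basis_exteriorAlgebra]
  exact basis_mul_of_not_disjoint b (ofCard rfl) (ofCard rfl)
    (Finset.not_disjoint_iff.mpr ⟨v, hv, Finset.mem_singleton_self v⟩)

theorem span_extWedge_mul_ι {κ : Type*} (σ : κ → Finset (Fin n)) :
    Submodule.span ℝ {x | ∃ i v, x = extWedge b (σ i) * ι ℝ (b v)} =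
      Submodule.span ℝ (extWedge b '' {τ | ∃ i v, v ∉ σ i ∧ τ = insert v (σ i)}) := by
  apply le_antisymm <;> rw [Submodule.span_le]
  · rintro _ ⟨i, v, rfl⟩
    by_cases hv : v ∈ σ i
    · rw [extWedge_mul_ι_of_mem b hv]
      exact Submodule.zero_mem _
    · obtain ⟨u, hu⟩ := extWedge_mul_ι_of_notMem b hv
      rw [hu, Units.smul_def]
      refine zsmul_mem (Submodule.subset_span ?_) _
      exact ⟨_, ⟨i, v, hv, rfl⟩, rfl⟩
  · rintro _ ⟨_, ⟨i, v, hv, rfl⟩, rfl⟩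
    obtain ⟨u, hu⟩ := extWedge_mul_ι_of_notMem b hv
    rw [← inv_smul_smul u (extWedge b _), ← hu, Units.smul_def]
    refine zsmul_mem (Submodule.subset_span ?_) _
    exact ⟨i, v, rfl⟩

theorem psiMap_apply (d : ℕ) (f : Fin n → Fin n → ℝ) (m : Fin (d - 1) → Fin n → ℝ) :
    psiMap d n f m = ∑ i, extWedge f (faceDel d n i) * ι ℝ (m i) := by
  simp [psiMap]

theorem range_psiMap (d : ℕ) :
    LinearMap.range (psiMap d n b) =
      Submodule.span ℝ {x | ∃ i v, x = extWedge b (faceDel d n i) * ι ℝ (b v)} := by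
  apply le_antisymm
  · rintro _ ⟨m, rfl⟩
    rw [psiMap_apply]
    refine Submodule.sum_mem _ fun i _ => ?_
    rw [← b.sum_repr (m i), map_sum, Finset.mul_sum]
    refine Submodule.sum_mem _ fun v _ => ?_
    rw [map_smul, mul_smul_comm]
    exact Submodule.smul_mem _ _ (Submodule.subset_span ⟨i, v, rfl⟩)
  · rw [Submodule.span_le]
    rintro _ ⟨i, v, rfl⟩
    exact ⟨Pi.single i (b v), by simp [psiMap_apply, Pi.single_apply, apply_ite]⟩

end Wedge

def initialFace (d n : ℕ) : Finset (Fin n) := {v | (v : ℕ) < d}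

/-- In the paper's 1-based numbering, `none` is `[d]` and `some (i, m)` is
`([d] ∖ {i + 2}) ∪ {d + m + 1}`. -/
def imageFace (d n : ℕ) : Option (Fin (d - 1) × Fin (n - d)) → Finset (Fin n)
  | none => initialFace d n
  | some (i, m) => insert ⟨d + m, by omega⟩ (faceDel d n i)

section Faces

variable {d n : ℕ}

theorem card_initialFace (hn : d ≤ n) : #(initialFace d n) = d := by
  rw [initialFace, Fin.card_filter_val_lt, min_eq_right hn]

theorem faceDel_eq_erase (hn : d ≤ n) (i : Fin (d - 1)) :
    faceDel d n i = (initialFace d n).erase ⟨i + 1, by omega⟩ := by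
  ext v
  simp [faceDel, initialFace, Fin.ext_iff, and_comm]

theorem card_faceDel (hn : d ≤ n) (i : Fin (d - 1)) : #(faceDel d n i) = d - 1 := by
  rw [faceDel_eq_erase hn, card_erase_of_mem (by simp [initialFace]; omega),
    card_initialFace hn]

theorem insert_faceDel (hn : d ≤ n) (i : Fin (d - 1)) :
    insert ⟨i + 1, by omega⟩ (faceDel d n i) = initialFace d n := by
  rw [faceDel_eq_erase hn, insert_erase (by simp [initialFace]; omega)]

theorem faceDel_injective (hn : d ≤ n) : Function.Injective (faceDel d n) := by
  intro i i' h
  have : (⟨i + 1, by omega⟩ : Fin n) ∉ faceDel d n i' := h ▸ by simp [faceDel]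
  simp only [faceDel, mem_filter, mem_univ, true_and, not_and_not_right] at this
  exact Fin.ext (by omega)

theorem filter_imageFace_some (i : Fin (d - 1)) (m : Fin (n - d)) :
    (imageFace d n (some (i, m))).filter (fun a : Fin n => (a : ℕ) < d) = faceDel d n i := by
  rw [imageFace.eq_def, filter_insert, if_neg (by simp), filter_true_of_mem]
  intro a ha
  exact (mem_filter.mp ha).2.1

theorem imageFace_injective (hn : d ≤ n) : Function.Injective (imageFace d n) := by
  rintro (_ | ⟨i, m⟩) (_ | ⟨i', m'⟩) h
  · rfl
  · have : (⟨d + m', by omega⟩ : Fin n) ∈ imageFace d n none := h ▸ mem_insert_self _ _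
    simp [imageFace, initialFace] at this
  · have : (⟨d + m, by omega⟩ : Fin n) ∈ imageFace d n none := h ▸ mem_insert_self _ _
    simp [imageFace, initialFace] at this
  · have hi : i = i' := faceDel_injective hn <| by
      rw [← filter_imageFace_some i m, h, filter_imageFace_some]
    subst hi
    have : (⟨d + m, by omega⟩ : Fin n) ∈ imageFace d n (some (i, m')) :=
      h ▸ mem_insert_self _ _
    simp [imageFace, faceDel, Fin.ext_iff] at this
    rw [Fin.ext this]

theorem card_imageFace (hd : 1 ≤ d) (hn : d ≤ n) (o : Option (Fin (d - 1) × Fin (n - d))) :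
    #(imageFace d n o) = d := by
  rcases o with _ | ⟨i, m⟩
  · exact card_initialFace hn
  · rw [imageFace, card_insert_of_notMem (by simp [faceDel]), card_faceDel hn]
    omega

theorem setOf_insert_faceDel_eq_range_imageFace (hd : 2 ≤ d) (hn : d ≤ n) :
    {τ | ∃ i v, v ∉ faceDel d n i ∧ τ = insert v (faceDel d n i)} =
      Set.range (imageFace d n) := by
  ext τ
  constructor
  · rintro ⟨i, v, hv, rfl⟩
    simp only [faceDel, mem_filter, mem_univ, true_and, not_and_not_right] at hv
    by_cases hvd : (v : ℕ) < d
    · refine ⟨none, ?_⟩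
      rw [imageFace, ← insert_faceDel hn i]
      congr
      exact (hv hvd).symm
    · refine ⟨some (i, ⟨v - d, by omega⟩), ?_⟩
      rw [imageFace]
      congr
      simp only
      omega
  · rintro ⟨_ | ⟨i, m⟩, rfl⟩
    · exact ⟨⟨0, by omega⟩, ⟨1, by omega⟩, by simp [faceDel], (insert_faceDel hn _).symm⟩
    · exact ⟨i, _, by simp [faceDel], rfl⟩

theorem zero_mem_imageFace [NeZero n] (hd : 1 ≤ d) (o : Option (Fin (d - 1) × Fin (n - d))) : 0 ∈ imageFace d n o := by
  rcases o with _ | ⟨i, m⟩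
  · simp only [imageFace, initialFace, mem_filter, mem_univ, true_and, Fin.val_zero]
    omega
  · refine mem_insert_of_mem ?_
    simp only [faceDel, mem_filter, mem_univ, true_and, Fin.val_zero]
    omega

theorem le_card_filter_imageFace (hn : d ≤ n) (o : Option (Fin (d - 1) × Fin (n - d))) :
    d - 1 ≤ #((imageFace d n o).filter fun a : Fin n => (a : ℕ) < d) := by
  rcases o with _ | ⟨i, m⟩
  · have hI : ∀ a ∈ initialFace d n, (a : ℕ) < d := fun a ha => by simpa [initialFace] using ha
    rw [imageFace, filter_true_of_mem hI, card_initialFace hn]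
    omega
  · rw [filter_imageFace_some, card_faceDel hn]

theorem mem_range_imageFace_of_card_filter [NeZero n] (hn : d ≤ n) {τ : Finset (Fin n)}
    (hcard : #τ = d) (h0 : 0 ∈ τ) (hcount : d - 1 ≤ #(τ.filter fun a : Fin n => (a : ℕ) < d)) :
    τ ∈ Set.range (imageFace d n) := by
  have hd : 1 ≤ d := hcard ▸ card_pos.mpr ⟨0, h0⟩
  set L := τ.filter fun a : Fin n => (a : ℕ) < d
  by_cases hlow : ∀ a ∈ τ, (a : ℕ) < d
  · refine ⟨none, (eq_of_subset_of_card_le (fun a ha => ?_) ?_).symm⟩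
    · simpa [imageFace, initialFace] using hlow a ha
    · rw [hcard, imageFace, card_initialFace hn]
  -- Otherwise `τ` has one element `v ≥ d` and misses one `u < d`, which is not `0`.
  push Not at hlow
  obtain ⟨v, hvτ, hvd⟩ := hlow
  have hLτ : L = τ.erase v := eq_of_subset_of_card_le
    (fun a ha => mem_erase.mpr ⟨fun h => by simp [L, h] at ha; omega, (mem_filter.mp ha).1⟩)
    (by rwa [card_erase_of_mem hvτ, hcard])
  have hLcard : #L = d - 1 := by rw [hLτ, card_erase_of_mem hvτ, hcard]
  obtain ⟨u, huI, huL⟩ := exists_mem_notMem_of_card_lt_card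
    (s := L) (t := initialFace d n) (by rw [hLcard, card_initialFace hn]; omega)
  have hud : (u : ℕ) < d := by simpa [initialFace] using huI
  have hu0 : (u : ℕ) ≠ 0 := fun h => huL (mem_filter.mpr ⟨(Fin.ext h : u = 0) ▸ h0, hud⟩)
  have hLface : L = faceDel d n ⟨u - 1, by omega⟩ := eq_of_subset_of_card_le
    (fun a ha => by
      simp only [faceDel, mem_filter, mem_univ, true_and]
      refine ⟨(mem_filter.mp ha).2, fun h => huL ?_⟩
      rwa [Fin.ext (show (a : ℕ) = u by omega)] at ha)
    (by rw [card_faceDel hn, hLcard])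
  refine ⟨some (⟨u - 1, by omega⟩, ⟨v - d, by omega⟩), ?_⟩
  rw [imageFace, ← hLface, hLτ,
    show (⟨d + (v - d), _⟩ : Fin n) = v from Fin.ext (by simp only; omega), insert_erase hvτ]

theorem mem_range_imageFace_iff [NeZero n] (hd : 1 ≤ d) (hn : d ≤ n) (τ : Finset (Fin n)) :
    τ ∈ Set.range (imageFace d n) ↔
      #τ = d ∧ 0 ∈ τ ∧ d - 1 ≤ #(τ.filter fun a : Fin n => (a : ℕ) < d) := by
  constructor
  · rintro ⟨o, rfl⟩
    exact ⟨card_imageFace hd hn o, zero_mem_imageFace hd o, le_card_filter_imageFace hn o⟩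
  · rintro ⟨hcard, h0, hcount⟩
    exact mem_range_imageFace_of_card_filter hn hcard h0 hcount

theorem sigma0_eq_imageFace (hd : 2 ≤ d) (hn : d < n) :
    sigma0 d n = imageFace d n (some (⟨0, by omega⟩, ⟨n - 1 - d, by omega⟩)) := by
  ext v
  simp only [sigma0, imageFace, faceDel, mem_filter, mem_univ, true_and, mem_insert, Fin.ext_iff]
  omega

theorem sigma0_orderEmbOfFin (hd : 2 ≤ d) (hn : d < n) (h : #(sigma0 d n) = d) (j : Fin d) :
    ((sigma0 d n).orderEmbOfFin h j : ℕ) =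
      if (j : ℕ) = 0 then 0 else if (j : ℕ) + 1 < d then (j : ℕ) + 1 else n - 1 := by
  let g : Fin d → Fin n := fun j =>
    ⟨if (j : ℕ) = 0 then 0 else if (j : ℕ) + 1 < d then (j : ℕ) + 1 else n - 1,
      by split_ifs <;> omega⟩
  have hg : g = (sigma0 d n).orderEmbOfFin h := by
    refine orderEmbOfFin_unique h (fun j => ?_) (fun a b hab => ?_)
    · simp only [g, sigma0, mem_filter, mem_univ, true_and]
      split_ifs <;> omega
    · simp only [g, Fin.lt_def] at hab ⊢
      split_ifs <;> omega
  rw [← hg]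

theorem pLE_sigma0_iff [NeZero n] (hd : 2 ≤ d) (hn : d < n) {τ : Finset (Fin n)} (hτ : #τ = d) :
    pLE τ (sigma0 d n) ↔ 0 ∈ τ ∧ d - 1 ≤ #(τ.filter fun a : Fin n => (a : ℕ) < d) := by
  have hσ : #(sigma0 d n) = d := by
    rw [sigma0_eq_imageFace hd hn, card_imageFace (by omega) hn.le]
  have hlt (j : Fin d) :
      (τ.orderEmbOfFin hτ j : ℕ) < d ↔ (j : ℕ) < #(τ.filter fun a : Fin n => (a : ℕ) < d) :=
    orderEmbOfFin_lt_iff τ hτ j ⟨d, hn⟩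
  simp only [pLE_iff_forall_orderEmbOfFin_le hτ hσ, Fin.le_def, sigma0_orderEmbOfFin hd hn hσ]
  constructor
  · intro hle
    refine ⟨?_, ?_⟩
    · have h0 := hle ⟨0, by omega⟩
      simp only [if_true, nonpos_iff_eq_zero] at h0
      exact (Fin.ext h0 : τ.orderEmbOfFin hτ ⟨0, _⟩ = 0) ▸ orderEmbOfFin_mem τ hτ _
    · have hle' := hle ⟨d - 2, by omega⟩
      simp only at hle'
      have := (hlt ⟨d - 2, by omega⟩).mp (by split_ifs at hle' <;> omega)
      simp only at this
      omega
  · rintro ⟨h0, hcount⟩ j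
    have hlast := (hlt ⟨d - 2, by omega⟩).mpr (by simp only; omega)
    split_ifs with hj0 hjd
    · have : τ.orderEmbOfFin hτ j ≤ 0 := by
        rw [show j = ⟨0, by omega⟩ from Fin.ext hj0, orderEmbOfFin_zero]
        exact min'_le τ 0 h0
      simpa using this
    -- `τ` is strictly increasing, so `τ_j ≤ τ_{d-2} - (d - 2 - j) ≤ j + 1`.
    · have := Fin.add_sub_le_of_strictMono (τ.orderEmbOfFin hτ).strictMono
        (show j ≤ ⟨d - 2, by omega⟩ from Fin.le_def.mpr (by simp only; omega))
      simp only at this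
      omega
    · have := (τ.orderEmbOfFin hτ j).isLt
      omega

theorem range_imageFace [NeZero n] (hd : 2 ≤ d) (hn : d < n) :
    Set.range (imageFace d n) = {τ | #τ = d ∧ pLE τ (sigma0 d n)} :=
  Set.ext fun τ => (mem_range_imageFace_iff (by omega) hn.le τ).trans
    (and_congr_right fun hτ => (pLE_sigma0_iff hd hn hτ).symm)

end Faces

theorem range_psiMap_eq_span_imageFace {d n : ℕ} (b : Module.Basis (Fin n) ℝ (Fin n → ℝ))
    (hd : 2 ≤ d) (hn : d ≤ n) :
    LinearMap.range (psiMap d n b) = Submodule.span ℝ (Set.range (extWedge b ∘ imageFace d n)) := by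
  rw [range_psiMap, span_extWedge_mul_ι, setOf_insert_faceDel_eq_range_imageFace hd hn,
    Set.range_comp]

theorem finrank_range_psiMap {d n : ℕ} (b : Module.Basis (Fin n) ℝ (Fin n → ℝ))
    (hd : 2 ≤ d) (hn : d ≤ n) :
    Module.finrank ℝ (LinearMap.range (psiMap d n b)) = (d - 1) * (n - d) + 1 := by
  rw [range_psiMap_eq_span_imageFace b hd hn,
    finrank_span_eq_card ((linearIndependent_extWedge b).comp _ (imageFace_injective hn))]
  simp

/-- Lemma 2.4: the image of `ψ` is spanned by
`{f_τ : |τ| = d, τ ≤_p {1,3,4,…,d,n}}` and its kernel has dimension `d²-d-1`. -/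
theorem psiMap_range_and_ker (d n : ℕ) (hd : 2 ≤ d) (hn : d + 1 ≤ n)
    (f : Fin n → (Fin n → ℝ)) (hf : ∃ b : Module.Basis (Fin n) ℝ (Fin n → ℝ), ⇑b = f) :
    LinearMap.range (psiMap d n f) =
      Submodule.span ℝ
        {x | ∃ τ : Finset (Fin n), τ.card = d ∧ pLE τ (sigma0 d n) ∧ x = extWedge f τ} ∧
    Module.finrank ℝ (LinearMap.ker (psiMap d n f)) = d ^ 2 - d - 1 := by
  obtain ⟨b, rfl⟩ := hf
  have : NeZero n := ⟨by omega⟩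
  refine ⟨?_, ?_⟩
  · rw [range_psiMap_eq_span_imageFace b hd (by omega), Set.range_comp, range_imageFace hd hn]
    congr 1
    ext x
    simp [eq_comm, and_assoc]
  · have hrank := (psiMap d n b).finrank_range_add_finrank_ker
    rw [finrank_range_psiMap b hd (by omega), Module.finrank_pi_fintype, Module.finrank_fin_fun,
      sum_const, card_univ, Fintype.card_fin, smul_eq_mul] at hrank
    have hsplit : (d - 1) * n = (d - 1) * (n - d) + (d - 1) * d := by
      rw [← mul_add, Nat.sub_add_cancel (by omega)]
    have hsq : d ^ 2 - d = (d - 1) * d := by rw [sq, Nat.sub_one_mul]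
    have hpos : d ≤ (d - 1) * d := Nat.le_mul_of_pos_left d (by omega)
    omega
end

section
/- Let d ≥ 2 and let K be a pure (d−1)-dimensional simplicial complex on [n] that is volume-rigid and a minimal cycle over ℤ. Then for every (d−1)-face σ of K, the complex K ∖ {σ} — obtained from K by deleting the face σ while keeping all other faces (in particular all proper subsets of σ) — is volume-rigid. -/
open scoped BigOperators

/-!
If `z` is an integral cycle of `K`, then `∑_σ z_σ · det M_{p,σ} = 0` for every `p`: expanding
`det M_{p,σ}` along its row of ones pairs `∂σ` with the `(d-1)`-minors of `p`, so the sum pairs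
`∂z = 0` with them. Each `det M_{p,σ}` is affine in every coordinate `p(v)_i`, with slope the
corresponding entry of `𝔙(K,p)`, so `z` lies in the kernel of `𝔙(K,p)`. As a minimal cycle is
nonzero on every facet, each column of `𝔙(K,p)` is a combination of the others, and deleting it
does not change the rank.
-/

namespace Matrix

variable {m n n' K : Type*} [Field K] [Fintype n] [Fintype n']

theorem rank_submatrix_col_eq_of_mulVec_eq_zero (A : Matrix m n K) (f : n' → n) {w : n → K}
    (hw : A *ᵥ w = 0) {j : n} (hj : w j ≠ 0) (hf : ∀ k ≠ j, k ∈ Set.range f) :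
    (A.submatrix id f).rank = A.rank := by
  classical
  rw [rank_eq_finrank_span_cols, rank_eq_finrank_span_cols]
  set S := Submodule.span K (Set.range (A.submatrix id f).col)
  have hcol : ∀ k ≠ j, A.col k ∈ S := fun k hk => by
    obtain ⟨k', rfl⟩ := hf k hk
    exact Submodule.subset_span ⟨k', rfl⟩
  have hsum : w j • A.col j = -∑ k ∈ Finset.univ.erase j, w k • A.col k := by
    rw [eq_neg_iff_add_eq_zero,
      Finset.add_sum_erase _ (fun k => w k • A.col k) (Finset.mem_univ j)]
    ext i
    simpa [mulVec, dotProduct, mul_comm] using congrFun hw i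
  have hcolj : A.col j ∈ S := by
    rw [← Submodule.smul_mem_iff S hj, hsum]
    exact S.neg_mem <| S.sum_mem fun k hk => S.smul_mem _ (hcol k (Finset.ne_of_mem_erase hk))
  suffices S = Submodule.span K (Set.range A.col) by rw [this]
  refine le_antisymm (Submodule.span_mono (Set.range_comp_subset_range f A.col)) ?_
  rw [Submodule.span_le]
  rintro _ ⟨k, rfl⟩
  by_cases hk : k = j
  · exact hk ▸ hcolj
  · exact hcol k hk

end Matrix

namespace Finset

variable {α M : Type*} [DecidableEq α] [AddCommMonoid M]

theorem sum_erase_eq_sum_powersetCard {s : Finset α} {m : ℕ} (hs : s.card = m + 1)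
    (f : Finset α → M) :
    ∑ a ∈ s, f (s.erase a) = ∑ t ∈ s.powersetCard m, f t := by
  have himage : s.powersetCard m = s.image s.erase := by
    ext t
    simp only [mem_powersetCard, mem_image]
    constructor
    · rintro ⟨hts, htcard⟩
      obtain ⟨a, ha⟩ : ∃ a, s \ t = {a} :=
        card_eq_one.mp (by rw [card_sdiff_of_subset hts]; omega)
      have has : a ∈ s \ t := ha ▸ mem_singleton_self a
      refine ⟨a, (mem_sdiff.mp has).1, ?_⟩
      rw [← sdiff_singleton_eq_erase, ← ha, sdiff_sdiff_eq_self hts]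
    · rintro ⟨a, ha, rfl⟩
      exact ⟨erase_subset a s, by rw [card_erase_of_mem ha, hs]; rfl⟩
  rw [himage, sum_image fun a ha b hb hab => s.erase_injOn ha hb hab]

end Finset

section VolumeRigidity

open Finset Matrix

variable {α : Type*} [LinearOrder α]

theorem skipF_eq_succAbove {m : ℕ} (r : Fin (m + 1)) :
    (skipF r : Fin m → Fin (m + 1)) = r.succAbove := by
  funext k
  unfold skipF Fin.succAbove
  by_cases h : (k : ℕ) < r
  · rw [if_pos h, if_pos (by simpa [Fin.lt_def] using h)]; rfl
  · rw [if_neg h, if_neg (by simp [Fin.lt_def]; omega)]; rfl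

theorem cofactor_eq_det_updateCol {m : ℕ} (M : Matrix (Fin (m + 1)) (Fin (m + 1)) ℝ)
    (r c : Fin (m + 1)) : cofactor M r c = (M.updateCol c (Pi.single r 1)).det := by
  rw [← det_transpose, ← updateRow_transpose, ← adjugate_apply,
    adjugate_fin_succ_eq_det_submatrix, cofactor, skipF_eq_succAbove, skipF_eq_succAbove,
    ← det_transpose (M.submatrix _ _), transpose_submatrix, add_comm]

theorem orderEmbOfFin_erase_orderEmbOfFin {σ : Finset α} {m : ℕ} (h : σ.card = m + 1)
    (c : Fin (m + 1)) (h' : (σ.erase (σ.orderEmbOfFin h c)).card = m) (k : Fin m) :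
    (σ.erase (σ.orderEmbOfFin h c)).orderEmbOfFin h' k = σ.orderEmbOfFin h (c.succAbove k) := by
  refine congrFun (orderEmbOfFin_unique h' (f := fun k => σ.orderEmbOfFin h (c.succAbove k))
    (fun k => mem_erase.mpr ⟨fun he => Fin.succAbove_ne c k ((σ.orderEmbOfFin h).injective he),
      orderEmbOfFin_mem _ _ _⟩)
    ((σ.orderEmbOfFin h).strictMono.comp (Fin.strictMono_succAbove c))).symm k

theorem faceSgn_erase_orderEmbOfFin {σ : Finset α} {d : ℕ} (h : σ.card = d) (c : Fin d) :
    faceSgn (σ.erase (σ.orderEmbOfFin h c)) σ = (-1) ^ ((c : ℕ) + 1) := by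
  have hsdiff : σ \ σ.erase (σ.orderEmbOfFin h c) = {σ.orderEmbOfFin h c} :=
    sdiff_erase_self (orderEmbOfFin_mem σ h c)
  have hidx : (σ.sort (· ≤ ·)).idxOf (σ.orderEmbOfFin h c) = c := by
    rw [orderEmbOfFin_apply]
    exact List.Nodup.idxOf_getElem (σ.sort_nodup (· ≤ ·)) _ _
  rw [faceSgn, dif_pos (by rw [hsdiff, card_singleton])]
  simp only [hsdiff, min'_singleton, hidx]

noncomputable def faceDet {m : ℕ} (p : α → Fin m → ℝ) (σ : Finset α) : ℝ :=
  if h : σ.card = m + 1 then (faceMat (m + 1) p σ h).det else 0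

noncomputable def coordDet {m : ℕ} (p : α → Fin m → ℝ) (τ : Finset α) : ℝ :=
  if h : τ.card = m then (Matrix.of fun i j : Fin m => p (τ.orderEmbOfFin h j) i).det
  else 0

theorem faceDet_eq_sum_coordDet_erase {m : ℕ} (p : α → Fin m → ℝ) {σ : Finset α}
    (h : σ.card = m + 1) :
    faceDet p σ = ∑ j : Fin (m + 1), (-1) ^ (m + (j : ℕ)) *
      coordDet p (σ.erase (σ.orderEmbOfFin h j)) := by
  rw [faceDet, dif_pos h, det_succ_row _ (Fin.last m)]
  refine sum_congr rfl fun j _ => ?_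
  have hcard : (σ.erase (σ.orderEmbOfFin h j)).card = m := by
    rw [card_erase_of_mem (orderEmbOfFin_mem σ h j), h]; rfl
  have hminor : (faceMat (m + 1) p σ h).submatrix (Fin.last m).succAbove j.succAbove =
      Matrix.of fun i k : Fin m =>
        p ((σ.erase (σ.orderEmbOfFin h j)).orderEmbOfFin hcard k) i := by
    ext i k
    rw [submatrix_apply, Fin.succAbove_last, faceMat,
      dif_pos (show ((Fin.castSucc i : Fin (m + 1)) : ℕ) < m + 1 - 1 from i.isLt)]
    simp only [of_apply, orderEmbOfFin_erase_orderEmbOfFin]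
    rfl
  rw [hminor, coordDet, dif_pos hcard, faceMat, dif_neg (by simp)]
  simp

theorem faceDet_eq_sum_powersetCard {m : ℕ} (p : α → Fin m → ℝ) {σ : Finset α}
    (h : σ.card = m + 1) :
    faceDet p σ =
      (-1) ^ (m + 1) * ∑ τ ∈ σ.powersetCard m, (faceSgn τ σ : ℝ) * coordDet p τ := by
  have hreindex (g : α → ℝ) : ∑ v ∈ σ, g v = ∑ j, g (σ.orderEmbOfFin h j) := by
    conv_lhs => rw [← map_orderEmbOfFin_univ σ h]
    rw [sum_map]
    rfl
  rw [faceDet_eq_sum_coordDet_erase p h, ← sum_erase_eq_sum_powersetCard h, mul_sum, hreindex]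
  refine sum_congr rfl fun j _ => ?_
  rw [faceSgn_erase_orderEmbOfFin]
  push_cast
  rw [← mul_assoc, ← pow_add, show m + 1 + (j + 1) = m + j + 2 by omega, pow_add _ _ 2]
  simp

theorem sum_mul_faceDet_eq_zero {m : ℕ} {K : Finset (Finset α)} {z : Finset α → ℤ}
    (hz : BoundaryZeroZ (m + 1) K z) (p : α → Fin m → ℝ) :
    ∑ σ ∈ K.filter (fun σ => σ.card = m + 1), (z σ : ℝ) * faceDet p σ = 0 := by
  set F := K.filter (fun σ => σ.card = m + 1)
  have hcycle (τ : Finset α) (hτ : τ.card = m) :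
      ∑ σ ∈ F.filter (τ ⊆ ·), (faceSgn τ σ : ℝ) * z σ = 0 := by
    rw [filter_filter]
    exact_mod_cast hz τ (by omega)
  calc ∑ σ ∈ F, (z σ : ℝ) * faceDet p σ
      = (-1) ^ (m + 1) * ∑ σ ∈ F, ∑ τ ∈ σ.powersetCard m,
          coordDet p τ * ((faceSgn τ σ : ℝ) * z σ) := by
        rw [mul_sum]
        refine sum_congr rfl fun σ hσ => ?_
        rw [faceDet_eq_sum_powersetCard p (mem_filter.mp hσ).2, mul_sum, mul_sum, mul_sum]
        exact sum_congr rfl fun τ _ => by ring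
    _ = (-1) ^ (m + 1) * ∑ τ ∈ F.biUnion (·.powersetCard m), coordDet p τ *
          ∑ σ ∈ F.filter (τ ⊆ ·), (faceSgn τ σ : ℝ) * z σ := by
        congr 1
        rw [sum_comm' (t' := F.biUnion (·.powersetCard m))
          (s' := fun τ => F.filter (τ ⊆ ·))]
        · exact sum_congr rfl fun τ _ => (mul_sum ..).symm
        · intro σ τ
          simp only [mem_powersetCard, mem_biUnion, mem_filter]
          exact ⟨fun ⟨hσ, hτσ, hτ⟩ => ⟨⟨hσ, hτσ⟩, σ, hσ, hτσ, hτ⟩,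
            fun ⟨⟨hσ, hτσ⟩, _, _, _, hτ⟩ => ⟨hσ, hτσ, hτ⟩⟩
    _ = 0 := by
        rw [sum_eq_zero fun τ hτ => ?_, mul_zero]
        obtain ⟨σ, -, hτ⟩ := mem_biUnion.mp hτ
        rw [hcycle τ (mem_powersetCard.mp hτ).2, mul_zero]

theorem faceMat_update_of_notMem {m : ℕ} (p : α → Fin m → ℝ) {σ : Finset α}
    (h : σ.card = m + 1) {v : α} (hv : v ∉ σ) (x : Fin m → ℝ) :
    faceMat (m + 1) (Function.update p v x) σ h = faceMat (m + 1) p σ h := by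
  ext r j
  have hne : σ.orderEmbOfFin h j ≠ v := fun he => hv (he ▸ orderEmbOfFin_mem σ h j)
  simp only [faceMat, Function.update_of_ne hne]

theorem faceMat_update_add_single {m : ℕ} (p : α → Fin m → ℝ) {σ : Finset α}
    (h : σ.card = m + 1) {v : α} (hv : v ∈ σ) (i : Fin m) :
    faceMat (m + 1) (Function.update p v (p v + Pi.single i 1)) σ h =
      (faceMat (m + 1) p σ h).updateCol ((σ.orderIsoOfFin h).symm ⟨v, hv⟩)
        ((fun r => faceMat (m + 1) p σ h r ((σ.orderIsoOfFin h).symm ⟨v, hv⟩)) +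
          Pi.single (Fin.castLE (Nat.sub_le (m + 1) 1) i) 1) := by
  set c := (σ.orderIsoOfFin h).symm ⟨v, hv⟩
  have hvc : σ.orderEmbOfFin h c = v := by
    rw [← coe_orderIsoOfFin_apply, OrderIso.apply_symm_apply]
  ext r j
  rcases eq_or_ne j c with rfl | hj
  · rw [updateCol_self]
    by_cases hr : (r : ℕ) < m
    · simp [faceMat, hvc, hr, Pi.single_apply, Fin.ext_iff]
    · simp [faceMat, hr, Pi.single_apply, Fin.ext_iff]
      omega
  · have hne : σ.orderEmbOfFin h j ≠ v :=
      hvc ▸ fun he => hj ((σ.orderEmbOfFin h).injective he)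
    simp only [updateCol_ne hj, faceMat, Function.update_of_ne hne]

theorem volMatrix_apply_eq_faceDet_update_sub {m : ℕ} (K : Finset (Finset α))
    (p : α → Fin m → ℝ) (v : α) (i : Fin m)
    (σ : {σ : Finset α // σ ∈ K ∧ σ.card = m + 1}) :
    volMatrix (m + 1) K p (v, i) σ =
      faceDet (Function.update p v (p v + Pi.single i 1)) σ.1 - faceDet p σ.1 := by
  obtain ⟨σ, -, h⟩ := σ
  simp only [volMatrix, faceDet, dif_pos h]
  by_cases hv : v ∈ σ
  · rw [dif_pos hv, faceMat_update_add_single p h hv, det_updateCol_add, updateCol_eq_self,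
      cofactor_eq_det_updateCol, add_sub_cancel_left]
  · rw [dif_neg hv, faceMat_update_of_notMem p h hv, sub_self]

theorem volMatrix_mulVec_eq_zero [Fintype α] {m : ℕ} {K : Finset (Finset α)}
    {z : Finset α → ℤ} (hz : BoundaryZeroZ (m + 1) K z) (p : α → Fin m → ℝ) :
    volMatrix (m + 1) K p *ᵥ (fun σ => (z σ.1 : ℝ)) = 0 := by
  have hcycle (q : α → Fin m → ℝ) :
      ∑ σ : {σ : Finset α // σ ∈ K ∧ σ.card = m + 1},
        (z σ.1 : ℝ) * faceDet q σ.1 = 0 := by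
    rw [← sum_subtype _ (fun σ => mem_filter) fun σ => (z σ : ℝ) * faceDet q σ]
    exact sum_mul_faceDet_eq_zero hz q
  funext ⟨v, i⟩
  change Fin m at i
  calc (volMatrix (m + 1) K p *ᵥ fun σ => (z σ.1 : ℝ)) (v, i)
      = ∑ σ : {σ : Finset α // σ ∈ K ∧ σ.card = m + 1},
          (z σ.1 : ℝ) * faceDet (Function.update p v (p v + Pi.single i 1)) σ.1 -
        ∑ σ : {σ : Finset α // σ ∈ K ∧ σ.card = m + 1},
          (z σ.1 : ℝ) * faceDet p σ.1 := by
        simp only [mulVec, dotProduct, volMatrix_apply_eq_faceDet_update_sub,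
          ← sum_sub_distrib]
        exact sum_congr rfl fun σ _ => by ring
    _ = 0 := by rw [hcycle, hcycle, sub_zero]

theorem VolumeRigid.erase_of_boundaryZeroZ [Fintype α] {m : ℕ} {V : Finset α}
    {K : Finset (Finset α)} (hrig : VolumeRigid (m + 1) V K) {z : Finset α → ℤ}
    (hz : BoundaryZeroZ (m + 1) K z) {σ : Finset α} (hσ : σ ∈ K) (hσcard : σ.card = m + 1)
    (hzσ : z σ ≠ 0) : VolumeRigid (m + 1) V (K.erase σ) := by
  intro p hp
  let f (τ : {τ // τ ∈ K.erase σ ∧ τ.card = m + 1}) :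
      {τ // τ ∈ K ∧ τ.card = m + 1} := ⟨τ.1, mem_of_mem_erase τ.2.1, τ.2.2⟩
  have hsub : volMatrix (m + 1) (K.erase σ) p = (volMatrix (m + 1) K p).submatrix id f :=
    rfl
  rw [← hrig p hp, hsub]
  refine rank_submatrix_col_eq_of_mulVec_eq_zero _ f (volMatrix_mulVec_eq_zero hz p)
    (j := ⟨σ, hσ, hσcard⟩) (Int.cast_ne_zero.mpr hzσ) fun τ hτ => ?_
  exact ⟨⟨τ.1, mem_erase.mpr ⟨fun h => hτ (Subtype.ext h), τ.2.1⟩, τ.2.2⟩, rfl⟩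

end VolumeRigidity

theorem volumeRigid_erase_facet_of_minimalCycle_general (d n : ℕ) (hd : 2 ≤ d)
    (K : Finset (Finset (Fin n)))
    (hrig : VolumeRigid d (Finset.univ : Finset (Fin n)) K)
    (hmin : IsMinimalCycleZ d K) :
    ∀ σ ∈ K, σ.card = d → VolumeRigid d (Finset.univ : Finset (Fin n)) (K.erase σ) := by
  obtain ⟨m, rfl⟩ : ∃ m, d = m + 1 := ⟨d - 1, by omega⟩
  obtain ⟨⟨z, -, hz, hz_ne⟩, -⟩ := hmin
  intro σ hσ hσcard
  exact hrig.erase_of_boundaryZeroZ hz hσ hσcard (hz_ne σ hσ hσcard)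

/-- Lemma 3.4: removing any facet from a volume-rigid minimal cycle
over `ℤ` preserves volume-rigidity. -/
theorem volumeRigid_erase_facet_of_minimalCycle (d n : ℕ) (hd : 2 ≤ d)
    (K : Finset (Finset (Fin n))) (hK : IsComplex K) (hpure : PureCx d K)
    (hrig : VolumeRigid d (Finset.univ : Finset (Fin n)) K)
    (hmin : IsMinimalCycleZ d K) :
    ∀ σ ∈ K, σ.card = d → VolumeRigid d (Finset.univ : Finset (Fin n)) (K.erase σ) :=
  volumeRigid_erase_facet_of_minimalCycle_general d n hd K hrig hmin
end

section
/- Let K ⊆ K' be simplicial complexes on [n] and let f be a generic basis of ℝ^n. Then Δ^p(K) ⊆ Δ^p(K'). -/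
open scoped BigOperators

theorem faceIdeal_anti {n : ℕ} {K K' : Finset (Finset (Fin n))} (hsub : K ⊆ K') (k : ℕ) :
    faceIdeal K' k ≤ faceIdeal K k :=
  Submodule.span_mono fun _ ⟨τ, hτ, hcard, hx⟩ => ⟨τ, fun h => hτ (hsub h), hcard, hx⟩

theorem qMap_eq_mapQ_qMap {n : ℕ} {K K' : Finset (Finset (Fin n))} (hsub : K ⊆ K') (k : ℕ) :
    qMap K k = Submodule.mapQ _ _ LinearMap.id (faceIdeal_anti hsub k) ∘ qMap K' k :=
  rfl

theorem DeltaLt_mono {n : ℕ} {K K' : Finset (Finset (Fin n))} (hsub : K ⊆ K')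
    (f : Fin n → (Fin n → ℝ)) (lt : Finset (Fin n) → Finset (Fin n) → Prop) :
    DeltaLt K f lt ⊆ DeltaLt K' f lt := by
  intro σ hσ hmem
  apply hσ
  rw [qMap_eq_mapQ_qMap hsub, Set.image_comp]
  exact Submodule.apply_mem_span_image_of_mem_span _ hmem

theorem DeltaP_mono_general (n : ℕ) (K K' : Finset (Finset (Fin n)))
    (hsub : K ⊆ K')
    (f : Fin n → (Fin n → ℝ)) :
    DeltaP K f ⊆ DeltaP K' f :=
  DeltaLt_mono hsub f pLT

/-- algebraic shifting preserves containment: `K ⊆ K'` implies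
`Δ^p(K) ⊆ Δ^p(K')`. -/
theorem DeltaP_mono (n : ℕ) (K K' : Finset (Finset (Fin n)))
    (hK : IsComplex K) (hK' : IsComplex K') (hsub : K ⊆ K')
    (f : Fin n → (Fin n → ℝ)) (hf : GenericBasis f) :
    DeltaP K f ⊆ DeltaP K' f :=
  DeltaP_mono_general n K K' hsub f
end

section
/- Let k ≥ 2 and let L be a pure (k−1)-dimensional simplicial complex on a finite vertex set V such that for every A ⊆ V with |A| ≥ k, the number of (k−1)-faces of L contained in A is at most (k−1)|A| − (k²−k−1). Then for any vertex v ∉ V, the cone v∗L is a pure k-dimensional simplicial complex on V ∪ {v} such that for every A ⊆ V ∪ {v} with |A| ≥ k+1, the number of k-faces of v∗L contained in A is at most k|A| − ((k+1)²−(k+1)−1). -/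
open scoped BigOperators

/-
A top face of the cone inside `A` is `v ∪ ρ` for a top face `ρ` of `L` inside `A \ {v}`, so
coning trades one vertex for one unit of dimension. The sparsity bound then passes to the cone
because `(k-1)(a-1) - (k²-k-1) ≤ ka - ((k+1)²-(k+1)-1)` once `a ≥ k+1`.
-/

section Cone

variable {α : Type*} [DecidableEq α]

def cone (v : α) (L : Finset (Finset α)) : Finset (Finset α) :=
  L ∪ L.image (insert v)

variable {v : α} {L : Finset (Finset α)} {k : ℕ}

theorem mem_cone {σ : Finset α} : σ ∈ cone v L ↔ σ ∈ L ∨ ∃ ρ ∈ L, insert v ρ = σ := by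
  simp only [cone, Finset.mem_union, Finset.mem_image]

theorem IsComplex.cone (hL : IsComplex L) (v : α) : IsComplex (cone v L) := by
  intro σ hσ τ hτσ
  rcases mem_cone.mp hσ with hσL | ⟨ρ, hρ, rfl⟩
  · exact mem_cone.mpr (.inl (hL σ hσL τ hτσ))
  by_cases hvτ : v ∈ τ
  · exact mem_cone.mpr
      (.inr ⟨τ.erase v, hL ρ hρ _ (Finset.subset_insert_iff.mp hτσ), Finset.insert_erase hvτ⟩)
  · exact mem_cone.mpr (.inl (hL ρ hρ τ ((Finset.subset_insert_iff_of_notMem hvτ).mp hτσ)))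

theorem PureCx.cone (hL : PureCx k L) (hvL : ∀ ρ ∈ L, v ∉ ρ) : PureCx (k + 1) (cone v L) := by
  have card_insert : ∀ ρ ∈ L, (insert v ρ).card = ρ.card + 1 :=
    fun ρ hρ => Finset.card_insert_of_notMem (hvL ρ hρ)
  have facet : ∀ ρ ∈ L, ∃ τ ∈ L, insert v ρ ⊆ insert v τ ∧ (insert v τ).card = k + 1 := by
    intro ρ hρ
    obtain ⟨τ, hτ, hρτ, hτk⟩ := hL.2 ρ hρ
    exact ⟨τ, hτ, Finset.insert_subset_insert v hρτ, by rw [card_insert τ hτ, hτk]⟩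
  refine ⟨fun σ hσ => ?_, fun σ hσ => ?_⟩
  · rcases mem_cone.mp hσ with hσL | ⟨ρ, hρ, rfl⟩
    · exact (hL.1 σ hσL).trans k.le_succ
    · rw [card_insert ρ hρ]
      exact Nat.succ_le_succ (hL.1 ρ hρ)
  · rcases mem_cone.mp hσ with hσL | ⟨ρ, hρ, rfl⟩
    · obtain ⟨τ, hτ, hστ, hτk⟩ := facet σ hσL
      exact ⟨insert v τ, mem_cone.mpr (.inr ⟨τ, hτ, rfl⟩),
        (Finset.subset_insert v σ).trans hστ, hτk⟩
    · obtain ⟨τ, hτ, hρτ, hτk⟩ := facet ρ hρ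
      exact ⟨insert v τ, mem_cone.mpr (.inr ⟨τ, hτ, rfl⟩), hρτ, hτk⟩

theorem subset_insert_of_mem_cone {V : Finset α} (hLV : ∀ ρ ∈ L, ρ ⊆ V) :
    ∀ σ ∈ cone v L, σ ⊆ insert v V := by
  intro σ hσ
  rcases mem_cone.mp hσ with hσL | ⟨ρ, hρ, rfl⟩
  · exact (hLV σ hσL).trans (Finset.subset_insert v V)
  · exact Finset.insert_subset_insert v (hLV ρ hρ)

theorem exists_eq_insert_of_mem_cone_of_card_eq (hdim : ∀ ρ ∈ L, ρ.card ≤ k)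
    {σ : Finset α} (hσ : σ ∈ cone v L) (hσk : σ.card = k + 1) : ∃ ρ ∈ L, insert v ρ = σ := by
  rcases mem_cone.mp hσ with hσL | hcone
  · have := hdim σ hσL
    omega
  · exact hcone

theorem filter_cone_subset_image (hdim : ∀ ρ ∈ L, ρ.card ≤ k) (hvL : ∀ ρ ∈ L, v ∉ ρ)
    (A : Finset α) :
    (cone v L).filter (fun σ => σ.card = k + 1 ∧ σ ⊆ A) ⊆
      (L.filter (fun ρ => ρ.card = k ∧ ρ ⊆ A.erase v)).image (insert v) := by
  intro σ hσ
  obtain ⟨hσ, hσk, hσA⟩ := Finset.mem_filter.mp hσ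
  obtain ⟨ρ, hρ, rfl⟩ := exists_eq_insert_of_mem_cone_of_card_eq hdim hσ hσk
  rw [Finset.card_insert_of_notMem (hvL ρ hρ)] at hσk
  refine Finset.mem_image_of_mem _ (Finset.mem_filter.mpr ⟨hρ, by omega, ?_⟩)
  exact Finset.subset_erase.mpr ⟨(Finset.subset_insert v ρ).trans hσA, hvL ρ hρ⟩

theorem filter_cone_eq_empty (hdim : ∀ ρ ∈ L, ρ.card ≤ k) {A : Finset α} (hvA : v ∉ A) :
    (cone v L).filter (fun σ => σ.card = k + 1 ∧ σ ⊆ A) = ∅ := by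
  refine Finset.filter_eq_empty_iff.mpr fun σ hσ ⟨hσk, hσA⟩ => ?_
  obtain ⟨ρ, -, rfl⟩ := exists_eq_insert_of_mem_cone_of_card_eq hdim hσ hσk
  exact hvA (hσA (Finset.mem_insert_self v ρ))

end Cone

theorem sparse_bound_pred_le (k a : ℕ) (ha : k + 1 ≤ a) :
    (k - 1) * (a - 1) - (k ^ 2 - k - 1) ≤ k * a - ((k + 1) ^ 2 - (k + 1) - 1) := by
  obtain _ | m := k
  · simp
  obtain ⟨b, rfl⟩ := Nat.exists_eq_add_of_le ha
  rw [show m + 1 + 1 + b - 1 = m + 1 + b by omega, Nat.add_sub_cancel]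
  have e1 : m * (m + 1 + b) = m * m + m + m * b := by ring
  have e2 : (m + 1) * (m + 1 + 1 + b) = m * m + 3 * m + 2 + m * b + b := by ring
  have e3 : (m + 1) ^ 2 = m * m + 2 * m + 1 := by ring
  have e4 : (m + 1 + 1) ^ 2 = m * m + 4 * m + 4 := by ring
  omega

theorem sparse_cone_general {α : Type*} [DecidableEq α] (k : ℕ)
    (V : Finset α) (L : Finset (Finset α)) (hL : IsComplex L) (hpure : PureCx k L)
    (hLV : ∀ σ ∈ L, σ ⊆ V)
    (hsparse : ∀ A ⊆ V, k ≤ A.card →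
      (L.filter (fun σ => σ.card = k ∧ σ ⊆ A)).card ≤ (k - 1) * A.card - (k ^ 2 - k - 1))
    (v : α) (hv : v ∉ V) :
    IsComplex (L ∪ L.image (insert v)) ∧
    PureCx (k + 1) (L ∪ L.image (insert v)) ∧
    (∀ σ ∈ L ∪ L.image (insert v), σ ⊆ insert v V) ∧
    ∀ A ⊆ insert v V, k + 1 ≤ A.card →
      ((L ∪ L.image (insert v)).filter (fun σ => σ.card = k + 1 ∧ σ ⊆ A)).card ≤
        k * A.card - ((k + 1) ^ 2 - (k + 1) - 1) := by
  have hvL : ∀ ρ ∈ L, v ∉ ρ := fun ρ hρ hvρ => hv (hLV ρ hρ hvρ)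
  refine ⟨hL.cone v, hpure.cone hvL, subset_insert_of_mem_cone hLV, fun A hA hAk => ?_⟩
  by_cases hvA : v ∈ A
  · have hAv : (A.erase v).card = A.card - 1 := Finset.card_erase_of_mem hvA
    calc ((cone v L).filter (fun σ => σ.card = k + 1 ∧ σ ⊆ A)).card
        ≤ (L.filter (fun ρ => ρ.card = k ∧ ρ ⊆ A.erase v)).card :=
          (Finset.card_le_card (filter_cone_subset_image hpure.1 hvL A)).trans
            Finset.card_image_le
      _ ≤ (k - 1) * (A.card - 1) - (k ^ 2 - k - 1) :=
          hAv ▸ hsparse _ (Finset.subset_insert_iff.mp hA) (by omega)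
      _ ≤ k * A.card - ((k + 1) ^ 2 - (k + 1) - 1) := sparse_bound_pred_le k A.card hAk
  · rw [show L ∪ L.image (insert v) = cone v L from rfl, filter_cone_eq_empty hpure.1 hvA]
    exact Nat.zero_le _

/-- coning a pure `(k-1)`-dimensional `(k-1, k²-k-1)`-sparse complex
yields a pure `k`-dimensional `(k, (k+1)²-(k+1)-1)`-sparse complex. -/
theorem sparse_cone {α : Type*} [DecidableEq α] (k : ℕ) (hk : 2 ≤ k)
    (V : Finset α) (L : Finset (Finset α)) (hL : IsComplex L) (hpure : PureCx k L)
    (hLV : ∀ σ ∈ L, σ ⊆ V)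
    (hsparse : ∀ A ⊆ V, k ≤ A.card →
      (L.filter (fun σ => σ.card = k ∧ σ ⊆ A)).card ≤ (k - 1) * A.card - (k ^ 2 - k - 1))
    (v : α) (hv : v ∉ V) :
    IsComplex (L ∪ L.image (insert v)) ∧
    PureCx (k + 1) (L ∪ L.image (insert v)) ∧
    (∀ σ ∈ L ∪ L.image (insert v), σ ⊆ insert v V) ∧
    ∀ A ⊆ insert v V, k + 1 ≤ A.card →
      ((L ∪ L.image (insert v)).filter (fun σ => σ.card = k + 1 ∧ σ ⊆ A)).card ≤
        k * A.card - ((k + 1) ^ 2 - (k + 1) - 1) :=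
  sparse_cone_general k V L hL hpure hLV hsparse v hv
end

section
/- For every d ≥ 3, let K be the pure (d−1)-dimensional simplicial complex on d+4 vertices obtained from the complete bipartite graph K_{3,3} — viewed as the 1-dimensional simplicial complex on {1,…,6} whose faces are the empty set, the singletons, and the edges {i,j} with i ∈ {1,2,3} and j ∈ {4,5,6} — by iterating the cone operation d−2 times, each time adding a new apex vertex. Then K is (d−1, d²−d−1)-sparse. -/
open scoped BigOperators

/-- The complete bipartite graph `K_{3,3}` as a 1-dimensional simplicial complex on the first
six elements of `Fin m` (0-based: parts `{0,1,2}` and `{3,4,5}`). -/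
def K33 (m : ℕ) : Finset (Finset (Fin m)) :=
  Finset.univ.filter (fun σ : Finset (Fin m) =>
    σ = ∅ ∨ (∃ i : Fin m, (i : ℕ) < 6 ∧ σ = {i}) ∨
      (∃ i j : Fin m, (i : ℕ) < 3 ∧ 3 ≤ (j : ℕ) ∧ (j : ℕ) < 6 ∧ σ = {i, j}))

/-- The cone over `K` with apex `v`. -/
def coneCx {α : Type*} [DecidableEq α] (v : α) (K : Finset (Finset α)) :
    Finset (Finset α) :=
  K ∪ K.image (insert v)

/-- The complex on `d+4` vertices obtained from `K_{3,3}` by iterating the cone operation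
`d-2` times, each time adding a new apex vertex (the apexes being `6,7,…,d+3`). -/
def iteratedConeK33 (d : ℕ) : Finset (Finset (Fin (d + 4))) :=
  (((Finset.univ : Finset (Fin (d + 4))).filter (fun v : Fin (d + 4) => 6 ≤ (v : ℕ))).sort (· ≤ ·)).foldl
    (fun Kc v => coneCx v Kc) (K33 (d + 4))

/-!
Every facet of the `(d-2)`-fold cone over `K_{3,3}` is an edge `{i, j}` of `K_{3,3}` together with
all `d - 2` apexes. So a set `A` spans a facet only if it contains every apex, and then the
facets in `A` are at most `p * q`, where `p` and `q` count the vertices of `A` in the two sides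
of `K_{3,3}`, while `|A| ≥ p + q + d - 2`. For such `A` the bound `(d - 1)|A| - (d² - d - 1)` is at
least `2(p + q) - 3`, and `p q ≤ 2(p + q) - 3` is `(p - 2)(q - 2) ≤ 1`, true as `1 ≤ p, q ≤ 3`.
-/

open Finset

section IteratedCone

variable {β : Type*} [DecidableEq β]

lemma mem_coneCx {v : β} {K : Finset (Finset β)} {σ : Finset β} :
    σ ∈ coneCx v K ↔ σ ∈ K ∨ ∃ ρ ∈ K, σ = insert v ρ := by
  simp [coneCx, eq_comm]

lemma mem_foldl_coneCx {l : List β} {K : Finset (Finset β)} {σ : Finset β} :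
    σ ∈ l.foldl (fun Kc v => coneCx v Kc) K ↔ ∃ τ ∈ K, ∃ S ⊆ l.toFinset, σ = τ ∪ S := by
  induction l generalizing K with
  | nil => simp
  | cons v l ih =>
    rw [List.foldl_cons, ih, List.toFinset_cons]
    constructor
    · rintro ⟨τ, hτ, S, hS, rfl⟩
      rcases mem_coneCx.mp hτ with hτ | ⟨ρ, hρ, rfl⟩
      · exact ⟨τ, hτ, S, hS.trans (subset_insert _ _), rfl⟩
      · exact ⟨ρ, hρ, insert v S, insert_subset_insert _ hS, by rw [insert_union, union_insert]⟩
    · rintro ⟨τ, hτ, S, hS, rfl⟩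
      by_cases hv : v ∈ S
      · refine ⟨insert v τ, mem_coneCx.mpr (Or.inr ⟨τ, hτ, rfl⟩), S.erase v, ?_, ?_⟩
        · simpa [subset_insert_iff] using hS
        · rw [insert_union, ← union_insert, insert_erase hv]
      · refine ⟨τ, mem_coneCx.mpr (Or.inl hτ), S, ?_, rfl⟩
        simpa [subset_insert_iff, erase_eq_of_notMem hv] using hS

lemma exists_eq_union_of_mem_foldl_coneCx {l : List β} {K : Finset (Finset β)} {k : ℕ}
    (hK : ∀ τ ∈ K, τ.card ≤ k) {σ : Finset β}
    (hσ : σ ∈ l.foldl (fun Kc v => coneCx v Kc) K) (hcard : σ.card = k + l.toFinset.card) :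
    ∃ τ ∈ K, τ.card = k ∧ σ = τ ∪ l.toFinset := by
  obtain ⟨τ, hτ, S, hS, rfl⟩ := mem_foldl_coneCx.mp hσ
  have hτS := card_union_le τ S
  have hSl := card_le_card hS
  have hτk := hK τ hτ
  obtain rfl : S = l.toFinset := eq_of_subset_of_card_le hS (by omega)
  exact ⟨τ, hτ, by omega, rfl⟩

end IteratedCone

lemma card_le_two_of_mem_K33 {m : ℕ} {τ : Finset (Fin m)} (hτ : τ ∈ K33 m) : τ.card ≤ 2 := by
  simp only [K33, mem_filter, mem_univ, true_and] at hτ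
  rcases hτ with rfl | ⟨i, -, rfl⟩ | ⟨i, j, -, -, -, rfl⟩
  · simp
  · simp
  · exact card_le_two

lemma exists_eq_pair_of_mem_K33 {m : ℕ} {τ : Finset (Fin m)} (hτ : τ ∈ K33 m)
    (hcard : τ.card = 2) :
    ∃ i j : Fin m, (i : ℕ) < 3 ∧ 3 ≤ (j : ℕ) ∧ (j : ℕ) < 6 ∧ τ = {i, j} := by
  simp only [K33, mem_filter, mem_univ, true_and] at hτ
  rcases hτ with rfl | ⟨i, -, rfl⟩ | hedge
  · simp at hcard
  · simp at hcard
  · exact hedge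

def apexSet (d : ℕ) : Finset (Fin (d + 4)) :=
  univ.filter (fun v => 6 ≤ (v : ℕ))

def leftSide {m : ℕ} (A : Finset (Fin m)) : Finset (Fin m) :=
  A.filter (fun v => (v : ℕ) < 3)

def rightSide {m : ℕ} (A : Finset (Fin m)) : Finset (Fin m) :=
  A.filter (fun v => 3 ≤ (v : ℕ) ∧ (v : ℕ) < 6)

lemma card_apexSet (d : ℕ) : (apexSet d).card = d - 2 := by
  have := card_filter_add_card_filter_not (s := (univ : Finset (Fin (d + 4))))
    (p := fun v => 6 ≤ (v : ℕ))
  simp only [not_le, Fin.card_filter_val_lt, card_univ, Fintype.card_fin] at this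
  rw [apexSet]
  omega

lemma card_filter_le_of_val_mem {n : ℕ} (A : Finset (Fin n)) {P : Fin n → Prop} [DecidablePred P]
    {s : Finset ℕ} (hP : ∀ v, P v → (v : ℕ) ∈ s) : (A.filter P).card ≤ s.card :=
  card_le_card_of_injOn (fun v => (v : ℕ)) (fun v hv => hP v (mem_filter.mp hv).2)
    Fin.val_injective.injOn

lemma card_leftSide_le {m : ℕ} (A : Finset (Fin m)) : (leftSide A).card ≤ 3 :=
  (card_filter_le_of_val_mem A fun _ => mem_range.mpr).trans_eq (card_range 3)

lemma card_rightSide_le {m : ℕ} (A : Finset (Fin m)) : (rightSide A).card ≤ 3 :=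
  (card_filter_le_of_val_mem A fun _ => mem_Ico.mpr).trans_eq (Nat.card_Ico 3 6)

lemma card_leftSide_add_card_rightSide_add_le {d : ℕ} {A : Finset (Fin (d + 4))}
    (hA : apexSet d ⊆ A) : (leftSide A).card + (rightSide A).card + (d - 2) ≤ A.card := by
  rw [← card_apexSet d, ← card_union_of_disjoint, ← card_union_of_disjoint]
  · exact card_le_card (union_subset (union_subset (filter_subset _ _) (filter_subset _ _)) hA)
  all_goals
    rw [disjoint_left]
    intro v
    simp only [leftSide, rightSide, apexSet, mem_union, mem_filter, mem_univ, true_and, not_and,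
      not_le, not_lt, and_imp]
    omega

lemma exists_eq_pair_union_apexSet {d : ℕ} (hd : 2 ≤ d) {σ : Finset (Fin (d + 4))}
    (hσ : σ ∈ iteratedConeK33 d) (hcard : σ.card = d) :
    ∃ i j : Fin (d + 4), (i : ℕ) < 3 ∧ 3 ≤ (j : ℕ) ∧ (j : ℕ) < 6 ∧ σ = {i, j} ∪ apexSet d := by
  obtain ⟨τ, hτ, hτ2, rfl⟩ := exists_eq_union_of_mem_foldl_coneCx
    (l := (apexSet d).sort (· ≤ ·)) (fun τ hτ => card_le_two_of_mem_K33 hτ) hσ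
    (by rw [sort_toFinset, card_apexSet]; omega)
  obtain ⟨i, j, hi, hj, hj6, rfl⟩ := exists_eq_pair_of_mem_K33 hτ hτ2
  exact ⟨i, j, hi, hj, hj6, by rw [sort_toFinset]⟩

lemma card_filter_facets_subset_le {d : ℕ} (hd : 2 ≤ d) (A : Finset (Fin (d + 4))) :
    ((iteratedConeK33 d).filter (fun σ => σ.card = d ∧ σ ⊆ A)).card ≤
      (leftSide A).card * (rightSide A).card := by
  rw [← card_product]
  refine (card_le_card fun σ hσ => ?_).trans
    (card_image_le (f := fun ij : Fin (d + 4) × Fin (d + 4) => {ij.1, ij.2} ∪ apexSet d))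
  obtain ⟨hσK, hσd, hσA⟩ := mem_filter.mp hσ
  obtain ⟨i, j, hi, hj, hj6, rfl⟩ := exists_eq_pair_union_apexSet hd hσK hσd
  exact mem_image.mpr ⟨(i, j), by simp_all [leftSide, rightSide, insert_subset_iff], rfl⟩

lemma mul_le_sparse_bound {d p q a : ℕ} (hd : 3 ≤ d) (hp : 1 ≤ p) (hp3 : p ≤ 3) (hq : 1 ≤ q)
    (hq3 : q ≤ 3) (ha : p + q + (d - 2) ≤ a) :
    p * q ≤ (d - 1) * a - (d ^ 2 - d - 1) := by
  obtain ⟨e, rfl⟩ := Nat.exists_eq_add_of_le' hd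
  have hpq : p * q + 3 ≤ 2 * (p + q) := by interval_cases p <;> interval_cases q <;> norm_num
  have hsq : (e + 3) ^ 2 - (e + 3) - 1 = e * e + 5 * e + 5 := by
    rw [show (e + 3) ^ 2 = e * e + 5 * e + 5 + 1 + (e + 3) by ring]; omega
  rw [hsq, show e + 3 - 1 = e + 2 by omega]
  apply Nat.le_sub_of_add_le
  have ha' : p + q + (e + 1) ≤ a := by omega
  nlinarith

/-- part of the proof of Corollary 1.4: the `(d-2)`-fold cone over
`K_{3,3}` is `(d-1, d²-d-1)`-sparse. -/
theorem iteratedConeK33_sparse (d : ℕ) (hd : 3 ≤ d) :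
    ∀ A : Finset (Fin (d + 4)), d ≤ A.card →
      ((iteratedConeK33 d).filter (fun σ => σ.card = d ∧ σ ⊆ A)).card ≤
        (d - 1) * A.card - (d ^ 2 - d - 1) := by
  intro A _
  rcases ((iteratedConeK33 d).filter (fun σ => σ.card = d ∧ σ ⊆ A)).eq_empty_or_nonempty
    with hF | ⟨σ, hσ⟩
  · simp [hF]
  obtain ⟨hσK, hσd, hσA⟩ := mem_filter.mp hσ
  obtain ⟨i, j, hi, hj, hj6, rfl⟩ := exists_eq_pair_union_apexSet (by omega) hσK hσd
  have hL : 1 ≤ (leftSide A).card :=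
    card_pos.mpr ⟨i, mem_filter.mpr ⟨hσA (by simp), hi⟩⟩
  have hR : 1 ≤ (rightSide A).card :=
    card_pos.mpr ⟨j, mem_filter.mpr ⟨hσA (by simp), hj, hj6⟩⟩
  calc _ ≤ (leftSide A).card * (rightSide A).card := card_filter_facets_subset_le (by omega) A
    _ ≤ (d - 1) * A.card - (d ^ 2 - d - 1) :=
      mul_le_sparse_bound hd hL (card_leftSide_le A) hR (card_rightSide_le A)
        (card_leftSide_add_card_rightSide_add_le (subset_union_right.trans hσA))
end

section
/- Let d ≥ 2, let K be a (d−1)-dimensional simplicial complex on [n], let p : [n] → ℝ^{d−1} be any map, let A be a real (d−1)×(d−1) matrix with trace 0, and let u ∈ ℝ^{d−1}. Define z ∈ ℝ^{(d−1)n} by z_{(v,i)} = (A·p(v) + u)_i for v ∈ [n] and i ∈ {1,…,d−1}. Then zᵀ·𝔙(K,p) = 0, i.e., z lies in the left kernel of the volume-rigidity matrix: for every (d−1)-face σ of K, Σ_{(v,i)} z_{(v,i)}·𝔙(K,p)_{(v,i),σ} = 0. -/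
open scoped BigOperators

/-!
The cofactors in the column `σ` of `𝔙(K,p)` form the adjugate of `M = M_{p,σ}`. The affine
map `x ↦ A x + u` acts on the columns `(p(v), 1)` of `M` as the block matrix
`B = [[A, u], [0, 0]]`, so the entries of `z` at the vertices of `σ` are the first `d - 1`
rows of `B M`, whose last row vanishes. Hence
`zᵀ 𝔙_σ = tr (B M adj M) = det M · tr B = det M · tr A = 0`:
infinitesimally, a traceless affine motion preserves every volume.
-/

open scoped Matrix

theorem Matrix.trace_mul_mul_adjugate {n R : Type*} [Fintype n] [DecidableEq n] [CommRing R]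
    (B M : Matrix n n R) : (B * M * M.adjugate).trace = B.trace * M.det := by
  rw [Matrix.mul_assoc, Matrix.mul_adjugate, Matrix.mul_smul, Matrix.mul_one,
    Matrix.trace_smul, smul_eq_mul, mul_comm]

lemma cofactor_eq_adjugate {m : ℕ} (M : Matrix (Fin (m + 1)) (Fin (m + 1)) ℝ)
    (r c : Fin (m + 1)) : cofactor M r c = M.adjugate c r := by
  rw [Matrix.adjugate_fin_succ_eq_det_submatrix]
  -- `skipF r` unfolds to `r.succAbove`
  rfl

/-- The block matrix `[[A, u], [0, 0]]`. -/
def affineHom {R : Type*} [Zero R] {m : ℕ} (A : Matrix (Fin m) (Fin m) R) (u : Fin m → R) :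
    Matrix (Fin (m + 1)) (Fin (m + 1)) R :=
  Matrix.of fun i k => Fin.lastCases 0 (fun i' => Fin.lastCases (u i') (A i') k) i

section affineHom

variable {R : Type*} {m : ℕ}

@[simp]
lemma trace_affineHom [AddCommMonoid R] (A : Matrix (Fin m) (Fin m) R) (u : Fin m → R) :
    (affineHom A u).trace = A.trace := by
  simp [Matrix.trace, Fin.sum_univ_castSucc, affineHom]

@[simp]
lemma affineHom_mul_apply_last [NonUnitalNonAssocSemiring R] (A : Matrix (Fin m) (Fin m) R)
    (u : Fin m → R) (M : Matrix (Fin (m + 1)) (Fin (m + 1)) R) (j : Fin (m + 1)) :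
    (affineHom A u * M) (Fin.last m) j = 0 := by
  simp [Matrix.mul_apply, affineHom]

lemma affineHom_mul_apply_castSucc [NonUnitalNonAssocSemiring R] (A : Matrix (Fin m) (Fin m) R)
    (u : Fin m → R) (M : Matrix (Fin (m + 1)) (Fin (m + 1)) R) (i : Fin m) (j : Fin (m + 1)) :
    (affineHom A u * M) i.castSucc j = ∑ k, A i k * M k.castSucc j + u i * M (Fin.last m) j := by
  simp [Matrix.mul_apply, Fin.sum_univ_castSucc, affineHom]

end affineHom

lemma affineHom_mul_faceMat {α : Type*} [LinearOrder α] {m : ℕ} (A : Matrix (Fin m) (Fin m) ℝ)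
    (u : Fin m → ℝ) (p : α → Fin m → ℝ) (σ : Finset α) (hσ : σ.card = m + 1) (i : Fin m)
    (j : Fin (m + 1)) :
    (affineHom A u * faceMat (m + 1) p σ hσ) i.castSucc j =
      (A *ᵥ p (σ.orderEmbOfFin hσ j) + u) i := by
  simp [affineHom_mul_apply_castSucc, faceMat, Matrix.mulVec, dotProduct]

section volMatrix

variable {α : Type*} [Fintype α] [LinearOrder α] {m : ℕ} (K : Finset (Finset α))
  (p : α → Fin m → ℝ) (σ : {σ : Finset α // σ ∈ K ∧ σ.card = m + 1})

lemma sum_mul_volMatrix (w : α × Fin m → ℝ) :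
    ∑ vi, w vi * volMatrix (m + 1) K p vi σ =
      ∑ j, ∑ i, w (σ.1.orderEmbOfFin σ.2.2 j, i) *
        (faceMat (m + 1) p σ.1 σ.2.2).adjugate j i.castSucc := by
  rw [← Fintype.sum_prod_type']
  symm
  refine Fintype.sum_of_injective (Prod.map (σ.1.orderEmbOfFin σ.2.2) id)
    ((σ.1.orderEmbOfFin σ.2.2).injective.prodMap Function.injective_id) _ _ ?_ ?_
  · rintro ⟨v, i⟩ hv
    have hvσ : v ∉ σ.1 := fun h => hv ⟨((σ.1.orderIsoOfFin σ.2.2).symm ⟨v, h⟩, i), by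
      simp [← Finset.coe_orderIsoOfFin_apply]⟩
    simp [volMatrix, hvσ]
  · rintro ⟨j, i⟩
    have hj : (σ.1.orderIsoOfFin σ.2.2).symm
        ⟨σ.1.orderEmbOfFin σ.2.2 j, σ.1.orderEmbOfFin_mem σ.2.2 j⟩ = j := by
      rw [OrderIso.symm_apply_eq]
      exact Subtype.ext (Finset.coe_orderIsoOfFin_apply _ _ _).symm
    simp only [volMatrix, Prod.map_fst, Prod.map_snd, id, dif_pos (σ.1.orderEmbOfFin_mem σ.2.2 j),
      hj, cofactor_eq_adjugate]
    -- `Fin.castLE _ i` is `i.castSucc`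
    rfl

lemma sum_affine_mul_volMatrix (A : Matrix (Fin m) (Fin m) ℝ) (u : Fin m → ℝ) :
    ∑ vi, (A *ᵥ p vi.1 + u) vi.2 * volMatrix (m + 1) K p vi σ =
      A.trace * (faceMat (m + 1) p σ.1 σ.2.2).det := by
  set M := faceMat (m + 1) p σ.1 σ.2.2
  calc _ = ∑ j, ∑ i : Fin m, (affineHom A u * M) i.castSucc j * M.adjugate j i.castSucc := by
        refine (sum_mul_volMatrix K p σ _).trans ?_
        simp only [affineHom_mul_faceMat, M]
    _ = ∑ j, ∑ i, (affineHom A u * M) i j * M.adjugate j i := by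
        simp [Fin.sum_univ_castSucc]
    _ = (affineHom A u * M * M.adjugate).trace := by
        simp only [Matrix.trace, Matrix.diag, Matrix.mul_apply]
        exact Finset.sum_comm
    _ = A.trace * M.det := by rw [Matrix.trace_mul_mul_adjugate, trace_affineHom]

end volMatrix

theorem trivial_left_kernel_general (d n : ℕ) (hd : 2 ≤ d)
    (K : Finset (Finset (Fin n)))
    (p : Fin n → Fin (d - 1) → ℝ)
    (A : Matrix (Fin (d - 1)) (Fin (d - 1)) ℝ) (hA : A.trace = 0)
    (u : Fin (d - 1) → ℝ) :
    ∀ σ : {σ : Finset (Fin n) // σ ∈ K ∧ σ.card = d},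
      ∑ vi : Fin n × Fin (d - 1),
        (A.mulVec (p vi.1) + u) vi.2 * volMatrix d K p vi σ = 0 := by
  obtain ⟨m, rfl⟩ : ∃ m, d = m + 1 := ⟨d - 1, by omega⟩
  intro σ
  have h := sum_affine_mul_volMatrix K p σ A u
  rw [hA, zero_mul] at h
  exact h

/-- the trivial left kernel of the volume-rigidity matrix: for any traceless
`(d-1)×(d-1)` matrix `A` and any `u ∈ ℝ^{d-1}`, the vector `z_{(v,i)} = (A·p(v) + u)_i` lies in
the left kernel of `𝔙(K,p)`. -/
theorem trivial_left_kernel (d n : ℕ) (hd : 2 ≤ d)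
    (K : Finset (Finset (Fin n))) (hK : IsComplex K) (hdim : DimPred d K)
    (p : Fin n → Fin (d - 1) → ℝ)
    (A : Matrix (Fin (d - 1)) (Fin (d - 1)) ℝ) (hA : A.trace = 0)
    (u : Fin (d - 1) → ℝ) :
    ∀ σ : {σ : Finset (Fin n) // σ ∈ K ∧ σ.card = d},
      ∑ vi : Fin n × Fin (d - 1),
        (A.mulVec (p vi.1) + u) vi.2 * volMatrix d K p vi σ = 0 :=
  trivial_left_kernel_general d n hd K p A hA u
end
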